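/- arXiv:2003.08782 — 9 statements merged into one kernel-verified Lean document; each statement's English description precedes it below -/
import Mathlib

section
/- Let G be a finite connected simple graph with n vertices and let T be a spanning tree of G, with m edges of G outside T. Then the average over all 2^m partial orientations σ of G with respect to T of the characteristic polynomial det(xI − H(G_T^σ)) equals the matching polynomial of G: (1/2^m) Σ_{σ ∈ Or_T(G)} det(xI − H(G_T^σ)) = μ_G(x). -/
open Polynomial

variable {V : Type*}

/-- A finset of edges (as unordered pairs) forms a matching of `G`:
all elements are edges of `G` and they are pairwise vertex-disjoint. -/
def IsMatchingSet (G : SimpleGraph V) (M : Finset (Sym2 V)) : Prop :=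
  (↑M ⊆ G.edgeSet) ∧ (M : Set (Sym2 V)).Pairwise fun e f => ∀ v, v ∈ e → v ∉ f

/-- `numMatchings G k` = number of matchings of `G` with exactly `k` edges. -/
noncomputable def numMatchings [Fintype V] (G : SimpleGraph V) (k : ℕ) : ℕ :=
  Nat.card {M : Finset (Sym2 V) // M.card = k ∧ IsMatchingSet G M}

/-- The matching polynomial `μ_G(x) = Σ_k (-1)^k m_k(G) x^(n-2k)`. -/
noncomputable def matchingPoly [Fintype V] (G : SimpleGraph V) : Polynomial ℝ :=
  ∑ k ∈ Finset.range (Fintype.card V + 1),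
    C ((-1 : ℝ) ^ k * (numMatchings G k : ℝ)) * X ^ (Fintype.card V - 2 * k)

open Classical in
/-- The Hermitian adjacency matrix of the partial orientation of `G` with respect to the
spanning tree `T`, where the edges outside `T` are `e 0, …, e (m-1)` and the `j`-th edge
`e j = (u_j, v_j)` is oriented from `u_j` to `v_j` if `s j = 1` and from `v_j` to `u_j`
if `s j = -1`: tree edges get entry `1`, and the edge `e j` contributes entries
`±(s j)·i`. -/
noncomputable def hermAdjP {m : ℕ} [Fintype V] [DecidableEq V] (T : SimpleGraph V)
    (e : Fin m → V × V) (s : Fin m → ℤˣ) : Matrix V V ℂ :=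
  (Matrix.of fun u v => if T.Adj u v then (1 : ℂ) else 0) +
    ∑ j, (((s j : ℤ) : ℂ) * Complex.I) •
      (Matrix.single (e j).1 (e j).2 1 - Matrix.single (e j).2 (e j).1 1)

/-!
Expand each `det (X - H)` over the permutations `σ` of `V` and average over the orientations.
The term of `σ` vanishes unless `G` joins every moved vertex `v` to `σ v`. If `σ` moreover has
a cycle of length at least three, that cycle cannot lie in the tree `T`, so it passes once
through some edge outside `T`; reversing the orientation of that edge negates the term, and
these terms cancel in the average. The surviving `σ` are the involutions pairing vertices along
edges of `G`, i.e. the matchings of `G`, and since `H u v * H v u = |H u v| ^ 2 = 1` on edges, the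
term of a matching with `k` edges is `(-1) ^ k * X ^ (n - 2 * k)` for every orientation.
-/

open Equiv Finset Matrix

namespace SimpleGraph.IsAcyclic

variable [Finite V] {T : SimpleGraph V}

theorem not_forall_adj_pow_apply (hT : T.IsAcyclic) (σ : Perm V) {x : V} (hx : σ (σ x) ≠ x) :
    ¬∀ a : ℕ, T.Adj ((σ ^ a) x) ((σ ^ (a + 1)) x) := by
  classical
  intro hadj
  have hbridge : ¬(T.deleteEdges {s(x, σ x)}).Reachable x (σ x) :=
    isBridge_iff.1 (isAcyclic_iff_forall_adj_isBridge.1 hT (by simpa using hadj 0))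
  have hreturn : ∃ n, (σ ^ (n + 1)) x = x :=
    ⟨orderOf σ - 1, by rw [Nat.sub_add_cancel (orderOf_pos σ), pow_orderOf_eq_one]; rfl⟩
  -- Walking along the orbit of `x` until it first returns never uses the edge `{x, σ x}`.
  have hreach : ∀ a ≤ Nat.find hreturn,
      (T.deleteEdges {s(x, σ x)}).Reachable (σ x) ((σ ^ (a + 1)) x) := by
    intro a ha
    induction a with
    | zero => simp
    | succ a ih =>
      refine (ih (by omega)).trans (Adj.reachable ?_)
      have hne : (σ ^ (a + 1)) x ≠ x := Nat.find_min hreturn (by omega)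
      refine deleteEdges_adj.2 ⟨hadj (a + 1), ?_⟩
      rw [Set.mem_singleton_iff, Sym2.eq_iff]
      rintro (⟨h₁, -⟩ | ⟨h₁, h₂⟩)
      · exact hne h₁
      · rw [pow_succ', Perm.mul_apply, h₁] at h₂
        exact hx h₂
  exact hbridge (by simpa [Nat.find_spec hreturn] using (hreach _ le_rfl).symm)

theorem exists_not_adj_perm_apply (hT : T.IsAcyclic) (σ : Perm V) {x : V} (hx : σ (σ x) ≠ x) :
    ∃ y, σ (σ y) ≠ y ∧ ¬T.Adj y (σ y) := by
  by_contra! h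
  refine hT.not_forall_adj_pow_apply σ hx fun a => ?_
  rw [pow_succ', Perm.mul_apply]
  refine h _ fun h' => hx ((σ ^ a).injective ?_)
  calc (σ ^ a) (σ (σ x)) = (σ * σ * σ ^ a) x := by
        rw [← Perm.mul_apply, ← Perm.mul_apply, ← pow_succ, ← pow_succ, pow_succ',
          pow_succ', mul_assoc]
    _ = (σ ^ a) x := h'

end SimpleGraph.IsAcyclic

def IsMatchingInvolution (G : SimpleGraph V) (σ : Perm V) : Prop :=
  Function.Involutive σ ∧ ∀ v, σ v ≠ v → G.Adj v (σ v)

namespace Equiv.Perm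

variable [DecidableEq V] [Fintype V]

def supportEdges (σ : Perm V) : Finset (Sym2 V) :=
  σ.support.image fun v => s(v, σ v)

variable {σ : Perm V}

theorem mk_mem_supportEdges_iff (hσ : Function.Involutive σ) {v w : V} :
    s(v, w) ∈ σ.supportEdges ↔ σ v = w ∧ v ≠ w := by
  simp only [supportEdges, mem_image, mem_support]
  constructor
  · rintro ⟨i, hi, h⟩
    rcases Sym2.eq_iff.1 h with ⟨rfl, rfl⟩ | ⟨rfl, rfl⟩
    · exact ⟨rfl, Ne.symm hi⟩
    · exact ⟨hσ i, hi⟩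
  · rintro ⟨rfl, h⟩
    exact ⟨v, Ne.symm h, rfl⟩

theorem card_support_eq_two_mul_card_supportEdges (hσ : Function.Involutive σ) :
    #σ.support = 2 * #σ.supportEdges := by
  rw [card_eq_sum_card_image (fun v => s(v, σ v)) σ.support, ← supportEdges, mul_comm,
    ← smul_eq_mul, ← sum_const]
  refine sum_congr rfl fun z hz => ?_
  obtain ⟨v, hv, rfl⟩ := mem_image.1 hz
  have hv' : σ v ≠ v := mem_support.1 hv
  convert card_pair hv'.symm
  ext i
  simp only [mem_filter, mem_support, mem_insert, mem_singleton]
  constructor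
  · rintro ⟨-, h⟩
    rcases Sym2.eq_iff.1 h with ⟨h, -⟩ | ⟨h, -⟩ <;> simp [h]
  · rintro (rfl | rfl)
    · exact ⟨hv', rfl⟩
    · rw [hσ v]
      exact ⟨hv'.symm, Sym2.eq_swap⟩

theorem sign_eq_neg_one_pow_card_supportEdges (hσ : Function.Involutive σ) :
    sign σ = (-1) ^ #σ.supportEdges := by
  have hσ2 : σ ^ 2 = 1 := Equiv.ext hσ
  rw [sign_of_pow_two_eq_one hσ2, card_fixedPoints, sum_cycleType,
    Nat.sub_sub_self (card_le_univ _), card_support_eq_two_mul_card_supportEdges hσ,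
    Nat.mul_div_cancel_left _ two_pos]

theorem isMatchingSet_supportEdges {G : SimpleGraph V} (hσ : IsMatchingInvolution G σ) :
    IsMatchingSet G σ.supportEdges := by
  refine ⟨fun z hz => ?_, fun z₁ hz₁ z₂ hz₂ hne v hv₁ hv₂ => hne ?_⟩
  · obtain ⟨v, hv, rfl⟩ := mem_image.1 hz
    exact hσ.2 v (mem_support.1 hv)
  · obtain ⟨w₁, rfl⟩ := Sym2.mem_iff_exists.1 hv₁
    obtain ⟨w₂, rfl⟩ := Sym2.mem_iff_exists.1 hv₂
    rw [← ((mk_mem_supportEdges_iff hσ.1).1 hz₁).1,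
      ← ((mk_mem_supportEdges_iff hσ.1).1 hz₂).1]

end Equiv.Perm

theorem eq_of_forall_apply_eq_and_ne_iff {f g : V → V}
    (h : ∀ v w, f v = w ∧ v ≠ w ↔ g v = w ∧ v ≠ w) : f = g := by
  funext v
  by_cases hf : f v = v
  · by_contra hne
    exact hne ((h v (g v)).2 ⟨rfl, fun hg => hne (hf.trans hg)⟩).1
  · exact ((h v (f v)).1 ⟨rfl, Ne.symm hf⟩).1.symm

open Classical in
noncomputable def matchingPartner (M : Finset (Sym2 V)) (v : V) : V :=
  if h : ∃ w, s(v, w) ∈ M then h.choose else v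

namespace IsMatchingSet

variable {G : SimpleGraph V} {M : Finset (Sym2 V)}

theorem eq_of_mk_mem (hM : IsMatchingSet G M) {v w w' : V} (h : s(v, w) ∈ M)
    (h' : s(v, w') ∈ M) : w = w' := by
  by_contra hne
  exact hM.2 h h' (fun h'' => hne (Sym2.congr_right.1 h'')) v (Sym2.mem_mk_left _ _)
    (Sym2.mem_mk_left _ _)

theorem mk_mem_iff (hM : IsMatchingSet G M) {v w : V} :
    s(v, w) ∈ M ↔ matchingPartner M v = w ∧ v ≠ w := by
  constructor
  · intro h
    have hex : ∃ w, s(v, w) ∈ M := ⟨w, h⟩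
    rw [matchingPartner, dif_pos hex]
    exact ⟨hM.eq_of_mk_mem hex.choose_spec h, G.ne_of_adj (hM.1 h)⟩
  · rintro ⟨rfl, hne⟩
    rw [matchingPartner] at hne ⊢
    split_ifs at hne ⊢ with hex
    · exact hex.choose_spec
    · exact absurd rfl hne

theorem involutive_matchingPartner (hM : IsMatchingSet G M) :
    Function.Involutive (matchingPartner M) := by
  intro v
  by_cases hv : matchingPartner M v = v
  · rw [hv, hv]
  · have h := hM.mk_mem_iff.2 ⟨rfl, Ne.symm hv⟩
    rw [Sym2.eq_swap] at h
    exact (hM.mk_mem_iff.1 h).1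

noncomputable def partnerPerm (hM : IsMatchingSet G M) : Perm V :=
  hM.involutive_matchingPartner.toPerm

theorem isMatchingInvolution_partnerPerm (hM : IsMatchingSet G M) :
    IsMatchingInvolution G hM.partnerPerm :=
  ⟨hM.involutive_matchingPartner, fun _ hv => hM.1 (hM.mk_mem_iff.2 ⟨rfl, Ne.symm hv⟩)⟩

variable [DecidableEq V] [Fintype V]

theorem supportEdges_partnerPerm (hM : IsMatchingSet G M) : hM.partnerPerm.supportEdges = M := by
  ext z
  refine Sym2.ind (fun v w => ?_) z
  exact (Perm.mk_mem_supportEdges_iff hM.involutive_matchingPartner).trans hM.mk_mem_iff.symm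

theorem partnerPerm_supportEdges {σ : Perm V} (hσ : IsMatchingInvolution G σ) :
    (Perm.isMatchingSet_supportEdges hσ).partnerPerm = σ := by
  refine Equiv.ext (congrFun (eq_of_forall_apply_eq_and_ne_iff fun v w => ?_))
  exact (Perm.isMatchingSet_supportEdges hσ).mk_mem_iff.symm.trans
    (Perm.mk_mem_supportEdges_iff hσ.1)

theorem two_mul_card_le (hM : IsMatchingSet G M) : 2 * #M ≤ Fintype.card V := by
  rw [← hM.supportEdges_partnerPerm,
    ← Perm.card_support_eq_two_mul_card_supportEdges hM.involutive_matchingPartner]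
  exact card_le_univ _

end IsMatchingSet

open Classical in
theorem sum_isMatchingInvolution_sign_smul [DecidableEq V] [Fintype V] {A : Type*}
    [AddCommGroup A] (G : SimpleGraph V) (f : ℕ → A) :
    ∑ σ with IsMatchingInvolution G σ, Perm.sign σ • f #σ.support =
      ∑ M with IsMatchingSet G M, (-1 : ℤˣ) ^ #M • f (2 * #M) := by
  refine sum_bij' (fun σ _ => σ.supportEdges) (fun M hM => (mem_filter.1 hM).2.partnerPerm)
    (fun σ hσ => mem_filter.2
      ⟨mem_univ _, Perm.isMatchingSet_supportEdges (mem_filter.1 hσ).2⟩)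
    (fun M hM => mem_filter.2
      ⟨mem_univ _, (mem_filter.1 hM).2.isMatchingInvolution_partnerPerm⟩)
    (fun σ hσ => IsMatchingSet.partnerPerm_supportEdges (mem_filter.1 hσ).2)
    (fun M hM => (mem_filter.1 hM).2.supportEdges_partnerPerm) fun σ hσ => ?_
  have hσ := (mem_filter.1 hσ).2.1
  rw [Perm.sign_eq_neg_one_pow_card_supportEdges hσ,
    Perm.card_support_eq_two_mul_card_supportEdges hσ]

open Classical in
theorem numMatchings_eq_card [Fintype V] (G : SimpleGraph V) (k : ℕ) :
    numMatchings G k = #{M : Finset (Sym2 V) | IsMatchingSet G M ∧ #M = k} := by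
  rw [numMatchings, Nat.card_eq_fintype_card, Fintype.card_subtype]
  simp only [and_comm]

open Classical in
theorem matchingPoly_eq_sum [Fintype V] [DecidableEq V] (G : SimpleGraph V) :
    matchingPoly G = ∑ M with IsMatchingSet G M, (-1) ^ #M * X ^ (Fintype.card V - 2 * #M) := by
  rw [← sum_fiberwise_of_maps_to (t := range (Fintype.card V + 1)) (g := fun M => #M)
    fun M hM => mem_range.2 (by have := (mem_filter.1 hM).2.two_mul_card_le; omega)]
  refine sum_congr rfl fun k _ => ?_
  rw [sum_congr rfl fun M hM => by rw [(mem_filter.1 hM).2], sum_const, filter_filter,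
    ← numMatchings_eq_card, nsmul_eq_mul, C_mul, C_pow, C_neg, C_1, ← C_eq_natCast]
  ring

def EnumeratesNonTreeEdges {m : ℕ} (G T : SimpleGraph V) (e : Fin m → V × V) : Prop :=
  ∀ x : Sym2 V, x ∈ G.edgeSet \ T.edgeSet ↔ ∃ j, s((e j).1, (e j).2) = x

section HermitianAdjacency

variable {m : ℕ} [Fintype V] [DecidableEq V] {G T : SimpleGraph V} {e : Fin m → V × V}

open Classical in
theorem hermAdjP_apply (s : Fin m → ℤˣ) (u v : V) :
    hermAdjP T e s u v = (if T.Adj u v then 1 else 0) +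
      ∑ j, ((s j : ℤ) : ℂ) * Complex.I *
        ((if e j = (u, v) then 1 else 0) - (if e j = (v, u) then 1 else 0)) := by
  simp [hermAdjP, Matrix.sum_apply, Matrix.single_apply, Prod.ext_iff, and_comm]

open Classical in
theorem hermAdjP_apply_of_forall_ne (s : Fin m → ℤˣ) {u v : V}
    (h : ∀ j, s((e j).1, (e j).2) ≠ s(u, v)) :
    hermAdjP T e s u v = if T.Adj u v then 1 else 0 := by
  rw [hermAdjP_apply, add_eq_left]
  refine sum_eq_zero fun j _ => ?_
  have h₁ : e j ≠ (u, v) := fun hj => h j (by rw [hj])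
  have h₂ : e j ≠ (v, u) := fun hj => h j (by rw [hj, Sym2.eq_swap])
  simp [h₁, h₂]

theorem hermAdjP_apply_of_not_adj (hTG : T ≤ G)
    (hcover : EnumeratesNonTreeEdges G T e)
    (s : Fin m → ℤˣ) {u v : V} (h : ¬G.Adj u v) : hermAdjP T e s u v = 0 := by
  have hne : ∀ j, s((e j).1, (e j).2) ≠ s(u, v) := fun j hj =>
    h ((hcover _).2 ⟨j, hj⟩).1
  rw [hermAdjP_apply_of_forall_ne s hne, if_neg fun hT => h (hTG hT)]

theorem hermAdjP_apply_self (hcover : EnumeratesNonTreeEdges G T e)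
    (s : Fin m → ℤˣ) (v : V) : hermAdjP T e s v v = 0 := by
  have hne : ∀ j, s((e j).1, (e j).2) ≠ s(v, v) := fun j hj =>
    ((hcover _).2 ⟨j, hj⟩).1.ne rfl
  rw [hermAdjP_apply_of_forall_ne s hne, if_neg (T.irrefl)]

theorem hermAdjP_apply_of_adj (hcover : EnumeratesNonTreeEdges G T e)
    (s : Fin m → ℤˣ) {u v : V} (h : T.Adj u v) : hermAdjP T e s u v = 1 := by
  have hne : ∀ j, s((e j).1, (e j).2) ≠ s(u, v) := fun j hj =>
    ((hcover _).2 ⟨j, hj⟩).2 h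
  rw [hermAdjP_apply_of_forall_ne s hne, if_pos h]

theorem hermAdjP_apply_fst_snd (hinj : Function.Injective fun j => s((e j).1, (e j).2))
    (hcover : EnumeratesNonTreeEdges G T e)
    (s : Fin m → ℤˣ) (j : Fin m) :
    hermAdjP T e s (e j).1 (e j).2 = ((s j : ℤ) : ℂ) * Complex.I ∧
      hermAdjP T e s (e j).2 (e j).1 = -(((s j : ℤ) : ℂ) * Complex.I) := by
  obtain ⟨hG, hT⟩ := (hcover _).2 ⟨j, rfl⟩
  have hT₁ : ¬T.Adj (e j).1 (e j).2 := hT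
  have hT₂ : ¬T.Adj (e j).2 (e j).1 := fun h => hT₁ h.symm
  have hswap : e j ≠ ((e j).2, (e j).1) := fun h => G.ne_of_adj hG (Prod.ext_iff.1 h).1
  have hother : ∀ k ≠ j, e k ≠ ((e j).1, (e j).2) ∧ e k ≠ ((e j).2, (e j).1) :=
    fun k hk => ⟨fun h => hk (hinj (by simp only [h])),
      fun h => hk (hinj (by simp only [h, Sym2.eq_swap]))⟩
  constructor <;> rw [hermAdjP_apply, sum_eq_single j]
  · simp [hT₁, hswap]
  · intro k _ hk
    simp [hother k hk]
  · simp
  · simp [hT₂, hswap]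
  · intro k _ hk
    simp [hother k hk]
  · simp

theorem hermAdjP_update_apply (s : Fin m → ℤˣ) (j : Fin m) (t : ℤˣ) {u v : V}
    (h : s((e j).1, (e j).2) ≠ s(u, v)) :
    hermAdjP T e (Function.update s j t) u v = hermAdjP T e s u v := by
  rw [hermAdjP_apply, hermAdjP_apply]
  congr 1
  refine sum_congr rfl fun k _ => ?_
  rcases eq_or_ne k j with rfl | hk
  · have h₁ : e k ≠ (u, v) := fun hk => h (by rw [hk])
    have h₂ : e k ≠ (v, u) := fun hk => h (by rw [hk, Sym2.eq_swap])
    simp [h₁, h₂]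
  · rw [Function.update_of_ne hk]

theorem hermAdjP_update_neg_apply (hinj : Function.Injective fun j => s((e j).1, (e j).2))
    (hcover : EnumeratesNonTreeEdges G T e)
    (s : Fin m → ℤˣ) {j : Fin m} {u v : V} (h : s((e j).1, (e j).2) = s(u, v)) :
    hermAdjP T e (Function.update s j (-s j)) u v = -hermAdjP T e s u v := by
  rcases Sym2.eq_iff.1 h with ⟨rfl, rfl⟩ | ⟨rfl, rfl⟩
  · rw [(hermAdjP_apply_fst_snd hinj hcover _ j).1, (hermAdjP_apply_fst_snd hinj hcover s j).1,
      Function.update_self]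
    push_cast
    ring
  · rw [(hermAdjP_apply_fst_snd hinj hcover _ j).2, (hermAdjP_apply_fst_snd hinj hcover s j).2,
      Function.update_self]
    push_cast
    ring

theorem hermAdjP_apply_mul_apply_swap (hinj : Function.Injective fun j => s((e j).1, (e j).2))
    (hcover : EnumeratesNonTreeEdges G T e)
    (s : Fin m → ℤˣ) {u v : V} (h : G.Adj u v) :
    hermAdjP T e s u v * hermAdjP T e s v u = 1 := by
  by_cases hT : T.Adj u v
  · rw [hermAdjP_apply_of_adj hcover s hT, hermAdjP_apply_of_adj hcover s hT.symm, one_mul]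
  obtain ⟨j, hj⟩ := (hcover s(u, v)).1 ⟨h, hT⟩
  have hs : ((s j : ℤ) : ℂ) ^ 2 = 1 := by
    rw [← Int.cast_pow, ← Units.val_pow_eq_pow_val, Int.units_sq, Units.val_one, Int.cast_one]
  obtain ⟨h₁, h₂⟩ := hermAdjP_apply_fst_snd hinj hcover s j
  rcases Sym2.eq_iff.1 hj with ⟨rfl, rfl⟩ | ⟨rfl, rfl⟩
  · rw [h₁, h₂]
    linear_combination hs - ((s j : ℤ) : ℂ) ^ 2 * Complex.I_sq
  · rw [h₁, h₂]
    linear_combination hs - ((s j : ℤ) : ℂ) ^ 2 * Complex.I_sq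

end HermitianAdjacency

section Determinant

variable {m : ℕ} [Fintype V] [DecidableEq V] {G T : SimpleGraph V} {e : Fin m → V × V}

theorem prod_charmatrix_hermAdjP_eq_zero (hTG : T ≤ G)
    (hcover : EnumeratesNonTreeEdges G T e)
    (s : Fin m → ℤˣ) {σ : Perm V} {v : V} (hv : σ v ≠ v) (hG : ¬G.Adj v (σ v)) :
    ∏ i, (hermAdjP T e s).charmatrix (σ i) i = 0 :=
  prod_eq_zero (mem_univ v) (by
    rw [charmatrix_apply_ne _ _ _ hv, hermAdjP_apply_of_not_adj hTG hcover s fun h => hG h.symm,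
      map_zero, neg_zero])

/-- Flipping the orientation of the edge `{σ y, y}` negates the term of `σ`, since this edge
is used only once by `σ`. -/
theorem sum_prod_charmatrix_hermAdjP_eq_zero_of_mk_eq
    (hinj : Function.Injective fun j => s((e j).1, (e j).2))
    (hcover : EnumeratesNonTreeEdges G T e)
    {σ : Perm V} {y : V} (hy : σ (σ y) ≠ y) {j : Fin m}
    (hj : s((e j).1, (e j).2) = s(σ y, y)) :
    ∑ s, ∏ i, (hermAdjP T e s).charmatrix (σ i) i = 0 := by
  have hσy : σ y ≠ y := fun h => hy (by rw [h, h])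
  have hother : ∀ i ∈ univ.erase y, s((e j).1, (e j).2) ≠ s(σ i, i) := by
    intro i hi h
    rw [hj, Sym2.eq_iff] at h
    rcases h with ⟨-, h⟩ | ⟨h₁, h₂⟩
    · exact ne_of_mem_erase hi h.symm
    · exact hy (by rw [h₁, ← h₂])
  have hrest : ∀ s, ∏ i ∈ univ.erase y,
      (hermAdjP T e (Function.update s j (-s j))).charmatrix (σ i) i =
        ∏ i ∈ univ.erase y, (hermAdjP T e s).charmatrix (σ i) i := fun s =>
    prod_congr rfl fun i hi => by
      rw [charmatrix_apply, charmatrix_apply, hermAdjP_update_apply s j _ (hother i hi)]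
  refine sum_ninvolution (fun s => Function.update s j (-s j)) (fun s => ?_)
    (fun s _ h => neg_units_ne_self (s j) (by simpa using congrFun h j)) (fun _ => mem_univ _)
    (fun s => by simp)
  rw [← mul_prod_erase _ _ (mem_univ y), ← mul_prod_erase _ _ (mem_univ y), hrest,
    charmatrix_apply_ne _ _ _ hσy, charmatrix_apply_ne _ _ _ hσy,
    hermAdjP_update_neg_apply hinj hcover s hj, map_neg, neg_neg]
  ring

theorem prod_charmatrix_hermAdjP_of_isMatchingInvolution
    (hinj : Function.Injective fun j => s((e j).1, (e j).2))
    (hcover : EnumeratesNonTreeEdges G T e)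
    (s : Fin m → ℤˣ) {σ : Perm V} (hσ : IsMatchingInvolution G σ) :
    ∏ i, (hermAdjP T e s).charmatrix (σ i) i = X ^ (Fintype.card V - #σ.support) := by
  have hsupport : ∏ i ∈ σ.support, (hermAdjP T e s).charmatrix (σ i) i = 1 := by
    refine prod_involution (fun a _ => σ a) (fun a ha => ?_)
      (fun a ha _ => Perm.mem_support.1 ha) (fun a ha => Perm.apply_mem_support.2 ha)
      (fun a _ => hσ.1 a)
    have ha' : σ a ≠ a := Perm.mem_support.1 ha
    rw [charmatrix_apply_ne _ _ _ ha', hσ.1 a, charmatrix_apply_ne _ _ _ ha'.symm, neg_mul_neg,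
      ← C_mul, hermAdjP_apply_mul_apply_swap hinj hcover s (hσ.2 a ha').symm, C_1]
  have hfixed : ∀ i ∈ σ.supportᶜ, (hermAdjP T e s).charmatrix (σ i) i = X := fun i hi => by
    rw [Perm.notMem_support.1 (mem_compl.1 hi), charmatrix_apply_eq, hermAdjP_apply_self hcover,
      map_zero, sub_zero]
  rw [← prod_mul_prod_compl σ.support, hsupport, one_mul, prod_congr rfl hfixed, prod_const,
    card_compl]

open Classical in
theorem sum_prod_charmatrix_hermAdjP (hTG : T ≤ G) (hT : T.IsAcyclic)
    (hinj : Function.Injective fun j => s((e j).1, (e j).2))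
    (hcover : EnumeratesNonTreeEdges G T e)
    (σ : Perm V) :
    ∑ s, ∏ i, (hermAdjP T e s).charmatrix (σ i) i =
      if IsMatchingInvolution G σ then 2 ^ m • X ^ (Fintype.card V - #σ.support) else 0 := by
  split_ifs with hσ
  · rw [sum_congr rfl fun s _ =>
        prod_charmatrix_hermAdjP_of_isMatchingInvolution hinj hcover s hσ, sum_const, card_univ,
      Fintype.card_fun, Fintype.card_units_int, Fintype.card_fin]
  by_cases hinv : Function.Involutive σ
  · obtain ⟨v, hv, hG⟩ : ∃ v, σ v ≠ v ∧ ¬G.Adj v (σ v) := by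
      simpa [IsMatchingInvolution, hinv] using hσ
    exact sum_eq_zero fun s _ => prod_charmatrix_hermAdjP_eq_zero hTG hcover s hv hG
  obtain ⟨x, hx⟩ := not_forall.1 hinv
  obtain ⟨y, hy, hTy⟩ := hT.exists_not_adj_perm_apply σ hx
  by_cases hGy : G.Adj y (σ y)
  · obtain ⟨j, hj⟩ := (hcover s(σ y, y)).1 ⟨hGy.symm, fun h => hTy h.symm⟩
    exact sum_prod_charmatrix_hermAdjP_eq_zero_of_mk_eq hinj hcover hy hj
  · exact sum_eq_zero fun s _ =>
      prod_charmatrix_hermAdjP_eq_zero hTG hcover s (fun h => hy (by rw [h, h])) hGy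

open Classical in
theorem sum_charpoly_hermAdjP (hTG : T ≤ G) (hT : T.IsAcyclic)
    (hinj : Function.Injective fun j => s((e j).1, (e j).2))
    (hcover : EnumeratesNonTreeEdges G T e) :
    ∑ s, (hermAdjP T e s).charpoly =
      2 ^ m • ∑ σ with IsMatchingInvolution G σ,
        Perm.sign σ • X ^ (Fintype.card V - #σ.support) := by
  simp_rw [charpoly, det_apply]
  rw [sum_comm]
  simp_rw [← smul_sum, sum_prod_charmatrix_hermAdjP hTG hT hinj hcover, smul_ite, smul_zero,
    ← sum_filter, smul_sum, smul_comm (2 ^ m)]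

end Determinant

theorem average_charpoly_eq_matchingPoly_general {V : Type*} [Fintype V] [DecidableEq V]
    (G T : SimpleGraph V) (hTG : T ≤ G) (hT : T.IsTree)
    (m : ℕ) (e : Fin m → V × V)
    (hinj : Function.Injective fun j => Sym2.mk (e j).1 (e j).2)
    (hcover : ∀ x : Sym2 V, x ∈ G.edgeSet \ T.edgeSet ↔ ∃ j, Sym2.mk (e j).1 (e j).2 = x) :
    ((1 : ℂ) / 2 ^ m) • ∑ s : Fin m → ℤˣ, (hermAdjP T e s).charpoly =
      (matchingPoly G).map (algebraMap ℝ ℂ) := by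
  classical
  rw [sum_charpoly_hermAdjP hTG hT.isAcyclic hinj hcover,
    sum_isMatchingInvolution_sign_smul G fun k => (X : ℂ[X]) ^ (Fintype.card V - k),
    matchingPoly_eq_sum, smul_comm, ← Nat.cast_smul_eq_nsmul ℂ, smul_smul]
  simp [Polynomial.map_sum, Units.smul_def]

/-- the average over all `2^m` partial orientations of `G` with respect to a
spanning tree `T` of the characteristic polynomial `det(xI − H(G_T^σ))` is the matching
polynomial of `G`. -/
theorem average_charpoly_eq_matchingPoly {V : Type*} [Fintype V] [DecidableEq V]
    (G T : SimpleGraph V) (hG : G.Connected) (hTG : T ≤ G) (hT : T.IsTree)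
    (m : ℕ) (e : Fin m → V × V)
    (hinj : Function.Injective fun j => Sym2.mk (e j).1 (e j).2)
    (hcover : ∀ x : Sym2 V, x ∈ G.edgeSet \ T.edgeSet ↔ ∃ j, Sym2.mk (e j).1 (e j).2 = x) :
    ((1 : ℂ) / 2 ^ m) • ∑ s : Fin m → ℤˣ, (hermAdjP T e s).charpoly =
      (matchingPoly G).map (algebraMap ℝ ℂ) :=
  average_charpoly_eq_matchingPoly_general G T hTG hT m e hinj hcover
end

section
/- Let G be a finite connected simple graph, T a spanning tree of G, and σ a partial orientation of G with respect to T. Then G_T^σ is switching equivalent to G (regarded as the mixed graph with no oriented edges, whose Hermitian adjacency matrix is the ordinary adjacency matrix A(G)) if and only if G = T, i.e., every edge of G lies in T. -/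
variable {V : Type*}

open Classical in
/-- The Hermitian adjacency matrix of the partial orientation `G_T^σ`. -/
noncomputable def mixedHerm (G T : SimpleGraph V) (σ : V → V → ℤ) : Matrix V V ℂ :=
  Matrix.of fun u v =>
    if T.Adj u v then 1 else if G.Adj u v then Complex.I * (σ u v : ℂ) else 0

/-- Two Hermitian adjacency matrices are switching equivalent: there is a diagonal matrix `S`
with diagonal entries in `{1, -1, i, -i}` such that `S⁻¹ M S = N` or
`S⁻¹ M S = conj N` (the Hermitian adjacency matrix of the converse). -/
noncomputable def SwitchEquiv [Fintype V] [DecidableEq V] (M N : Matrix V V ℂ) : Prop :=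
  ∃ d : V → ℂ,
    (∀ v, d v = 1 ∨ d v = -1 ∨ d v = Complex.I ∨ d v = -Complex.I) ∧
    ((Matrix.diagonal d)⁻¹ * M * Matrix.diagonal d = N ∨
     (Matrix.diagonal d)⁻¹ * M * Matrix.diagonal d = N.map (starRingEnd ℂ))

/-!
A switching `S = diag d` turning `G_T^σ` into `G` (or its converse, which is `G` again, since
`A(G)` is real) must satisfy `(d u)⁻¹ H_uv d v = A_uv` entrywise. On a tree edge both entries
are `1`, so `d` is constant along the edges of `T`, hence constant since `T` is connected. Then
a non-tree edge `uv` would need its entry `i σ(u,v)`, which is purely imaginary, to equal `1`.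
-/

open Matrix

lemma Matrix.diagonal_inv_mul_mul_diagonal_apply {n K : Type*} [Fintype n] [DecidableEq n]
    [Field K] {d : n → K} (hd : ∀ i, d i ≠ 0) (M : Matrix n n K) (i j : n) :
    ((diagonal d)⁻¹ * M * diagonal d) i j = (d i)⁻¹ * M i j * d j := by
  have hinv : (diagonal d)⁻¹ = diagonal fun i => (d i)⁻¹ :=
    inv_eq_left_inv <| by simp [inv_mul_cancel₀ (hd _)]
  rw [hinv, mul_diagonal, diagonal_mul]

lemma SimpleGraph.Reachable.eq_of_forall_adj {α : Type*} {T : SimpleGraph V} {f : V → α}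
    (hf : ∀ u v, T.Adj u v → f u = f v) {u v : V} (huv : T.Reachable u v) : f u = f v := by
  obtain ⟨w⟩ := huv
  induction w with
  | nil => rfl
  | cons hadj _ ih => exact (hf _ _ hadj).trans ih

lemma SimpleGraph.map_starRingEnd_adjMatrix {R : Type*} [CommSemiring R] [StarRing R]
    (G : SimpleGraph V) [DecidableRel G.Adj] :
    (G.adjMatrix R).map (starRingEnd R) = G.adjMatrix R := by
  ext u v
  by_cases h : G.Adj u v <;> simp [h]

lemma SwitchEquiv.refl [Fintype V] [DecidableEq V] (M : Matrix V V ℂ) : SwitchEquiv M M :=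
  ⟨1, fun _ => Or.inl rfl, Or.inl <| by simp⟩

lemma SwitchEquiv.exists_diagonal_conj_eq_adjMatrix [Fintype V] [DecidableEq V]
    {M : Matrix V V ℂ} {G : SimpleGraph V} [DecidableRel G.Adj]
    (h : SwitchEquiv M (G.adjMatrix ℂ)) :
    ∃ d : V → ℂ, (∀ v, d v ≠ 0) ∧ ∀ u v, (d u)⁻¹ * M u v * d v = G.adjMatrix ℂ u v := by
  obtain ⟨d, hd, hconj⟩ := h
  have hd0 : ∀ v, d v ≠ 0 := fun v => by
    rcases hd v with h | h | h | h <;> simp [h]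
  rw [G.map_starRingEnd_adjMatrix, or_self] at hconj
  exact ⟨d, hd0, fun u v => by
    rw [← diagonal_inv_mul_mul_diagonal_apply hd0, hconj]⟩

section mixedHerm

variable {G T : SimpleGraph V} {σ : V → V → ℤ} {u v : V}

lemma mixedHerm_apply_of_adj (h : T.Adj u v) : mixedHerm G T σ u v = 1 := by
  simp [mixedHerm, h]

lemma mixedHerm_apply_of_not_adj (hG : G.Adj u v) (hT : ¬T.Adj u v) :
    mixedHerm G T σ u v = Complex.I * σ u v := by
  simp [mixedHerm, hG, hT]

lemma mixedHerm_self [DecidableRel T.Adj] : mixedHerm T T σ = T.adjMatrix ℂ := by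
  ext u v
  by_cases h : T.Adj u v <;> simp [mixedHerm, h]

lemma le_of_diagonal_conj_mixedHerm_eq_adjMatrix [DecidableRel G.Adj] (hTG : T ≤ G)
    (hT : T.Preconnected) {d : V → ℂ} (hd : ∀ v, d v ≠ 0)
    (hconj : ∀ u v, (d u)⁻¹ * mixedHerm G T σ u v * d v = G.adjMatrix ℂ u v) : G ≤ T := by
  have hconst : ∀ u v, d u = d v := by
    refine fun u v => (hT u v).eq_of_forall_adj fun u v huv => ?_
    have h := hconj u v
    rw [mixedHerm_apply_of_adj huv, SimpleGraph.adjMatrix_apply, if_pos (hTG huv), mul_one,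
      inv_mul_eq_one₀ (hd u)] at h
    exact h
  intro u v huv
  by_contra hTuv
  have h := hconj u v
  rw [mixedHerm_apply_of_not_adj huv hTuv, SimpleGraph.adjMatrix_apply, if_pos huv, hconst u v,
    mul_comm, ← mul_assoc, mul_inv_cancel₀ (hd v), one_mul] at h
  simpa using congrArg Complex.re h

end mixedHerm

open Classical in
theorem switchEquiv_unoriented_iff_eq_tree_general {V : Type*} [Fintype V] [DecidableEq V]
    (G T : SimpleGraph V) (hTG : T ≤ G) (hT : T.IsTree)
    (σ : V → V → ℤ) :
    SwitchEquiv (mixedHerm G T σ) (G.adjMatrix ℂ) ↔ G = T := by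
  constructor
  · intro hS
    obtain ⟨d, hd, hconj⟩ := hS.exists_diagonal_conj_eq_adjMatrix
    exact le_antisymm
      (le_of_diagonal_conj_mixedHerm_eq_adjMatrix hTG hT.connected.preconnected hd hconj) hTG
  · rintro rfl
    rw [mixedHerm_self]
    exact SwitchEquiv.refl _

open Classical in
/-- For a connected graph `G` with spanning tree `T` and a partial orientation
`σ` of `G` with respect to `T`, `G_T^σ` is switching equivalent to the unoriented graph `G`
if and only if `G = T`. -/
theorem switchEquiv_unoriented_iff_eq_tree {V : Type*} [Fintype V] [DecidableEq V]
    (G T : SimpleGraph V) (hG : G.Connected) (hTG : T ≤ G) (hT : T.IsTree)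
    (σ : V → V → ℤ)
    (hskew : ∀ u v, σ v u = -σ u v)
    (hval : ∀ u v, G.Adj u v → ¬ T.Adj u v → σ u v = 1 ∨ σ u v = -1) :
    SwitchEquiv (mixedHerm G T σ) (G.adjMatrix ℂ) ↔ G = T :=
  switchEquiv_unoriented_iff_eq_tree_general G T hTG hT σ
end

section
/- Let G be a finite connected simple graph, T a spanning tree of G, and σ a partial orientation of G with respect to T. Then G_T^σ is switching equivalent to some oriented graph of G (a mixed graph on G in which every edge is oriented, so its Hermitian adjacency matrix has all its nonzero entries in {i, −i}) if and only if for every even cycle C of G, T contains at most |C| − 2 edges of C, where |C| denotes the number of edges of C. -/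
variable {V : Type*}

open Classical in
/-- The Hermitian adjacency matrix of a complete orientation `G^τ`. -/
noncomputable def orientHerm (G : SimpleGraph V) (τ : V → V → ℤ) : Matrix V V ℂ :=
  Matrix.of fun u v => if G.Adj u v then Complex.I * (τ u v : ℂ) else 0

/-!
The product of the entries of a Hermitian adjacency matrix along a closed walk is unchanged by
diagonal switching and conjugated by passing to the converse. Its square is `(-1)` to the number
of non-tree edges for `G_T^σ`, and `(-1)` to the length for an orientation, so switching
equivalence forces every closed walk to use an even number of tree edges; for an even cycle,
which cannot lie entirely in the acyclic `T`, this means at most `|C| - 2` of them.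
Conversely, properly 2-colour `T`. The cycle condition on the fundamental cycle of a non-tree
edge forces its endpoints to have the same colour, so switching by `i` on one colour class turns
each tree entry `1` into `±i` and fixes the entries `± i` of the non-tree edges.
-/

open Matrix SimpleGraph

variable {G T : SimpleGraph V}

namespace SimpleGraph.Walk

def entryProd {R : Type*} [Monoid R] (M : Matrix V V R) {u v : V} (p : G.Walk u v) : R :=
  (p.darts.map fun d => M d.fst d.snd).prod

@[simp]
lemma entryProd_nil {R : Type*} [Monoid R] (M : Matrix V V R) {u : V} :
    (nil : G.Walk u u).entryProd M = 1 := rfl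

@[simp]
lemma entryProd_cons {R : Type*} [Monoid R] (M : Matrix V V R) {u v w : V} (h : G.Adj u v)
    (p : G.Walk v w) : (cons h p).entryProd M = M u v * p.entryProd M := by
  simp [entryProd]

lemma entryProd_map {R S F : Type*} [Monoid R] [Monoid S] [FunLike F R S]
    [MonoidHomClass F R S] (f : F) (M : Matrix V V R) {u v : V} (p : G.Walk u v) :
    p.entryProd (M.map f) = f (p.entryProd M) := by
  simp [entryProd, map_list_prod, Function.comp_def]

end SimpleGraph.Walk

section Switching

variable {K : Type*} [Fintype V] [DecidableEq V] [Field K]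

lemma Matrix.inv_diagonal_mul_mul_diagonal_apply {d : V → K} (hd : ∀ v, d v ≠ 0)
    (M : Matrix V V K) (a b : V) :
    ((diagonal d)⁻¹ * M * diagonal d) a b = (d a)⁻¹ * M a b * d b := by
  have hinv : (diagonal d)⁻¹ = diagonal d⁻¹ :=
    inv_eq_left_inv (by rw [diagonal_mul_diagonal, ← diagonal_one]; congr 1; ext v; simp [hd v])
  rw [hinv, mul_diagonal, diagonal_mul, Pi.inv_apply]

lemma SimpleGraph.Walk.entryProd_inv_diagonal_mul_mul_diagonal {d : V → K} (hd : ∀ v, d v ≠ 0)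
    (M : Matrix V V K) {u v : V} (p : G.Walk u v) :
    p.entryProd ((diagonal d)⁻¹ * M * diagonal d) = (d u)⁻¹ * p.entryProd M * d v := by
  induction p with
  | nil => simp [hd]
  | @cons a b c h p ih =>
    rw [entryProd_cons, entryProd_cons, ih, inv_diagonal_mul_mul_diagonal_apply hd]
    field_simp [hd b]

lemma SwitchEquiv.entryProd_eq_or_eq_conj {M N : Matrix V V ℂ} (h : SwitchEquiv M N) {u : V}
    (c : G.Walk u u) :
    c.entryProd M = c.entryProd N ∨ c.entryProd M = starRingEnd ℂ (c.entryProd N) := by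
  obtain ⟨d, hd, hMN | hMN⟩ := h
  all_goals
    have hd0 : ∀ v, d v ≠ 0 := fun v => by
      rcases hd v with h | h | h | h <;> simp [h]
    have hc := c.entryProd_inv_diagonal_mul_mul_diagonal hd0 M
    rw [hMN, mul_right_comm, inv_mul_cancel₀ (hd0 u), one_mul] at hc
  · exact Or.inl hc.symm
  · exact Or.inr (by rw [← hc, Walk.entryProd_map])

end Switching

lemma orientHerm_eq_mixedHerm_bot (G : SimpleGraph V) (τ : V → V → ℤ) :
    orientHerm G τ = mixedHerm G ⊥ τ := by
  ext u v
  simp [orientHerm, mixedHerm]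

open Classical in
lemma SimpleGraph.Walk.entryProd_mixedHerm_sq {σ : V → V → ℤ}
    (hval : ∀ u v, G.Adj u v → ¬ T.Adj u v → σ u v = 1 ∨ σ u v = -1) {u v : V}
    (p : G.Walk u v) :
    p.entryProd (mixedHerm G T σ) ^ 2
      = (-1 : ℂ) ^ (p.edges.filter fun e => e ∉ T.edgeSet).length := by
  induction p with
  | nil => simp
  | @cons a b c h p ih =>
    by_cases ht : T.Adj a b
    · have he : s(a, b) ∈ T.edgeSet := ht
      simpa [mixedHerm, ht, he] using ih
    · have he : s(a, b) ∉ T.edgeSet := ht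
      have hsq : mixedHerm G T σ a b ^ 2 = -1 := by
        rcases hval a b h ht with hσ | hσ <;> simp [mixedHerm, ht, h, hσ]
      rw [entryProd_cons, mul_pow, hsq, ih, edges_cons, List.filter_cons_of_pos (by simpa),
        List.length_cons, pow_succ']

lemma SimpleGraph.Walk.entryProd_orientHerm_sq {τ : V → V → ℤ}
    (hτ : ∀ u v, G.Adj u v → τ u v = 1 ∨ τ u v = -1) {u v : V} (p : G.Walk u v) :
    p.entryProd (orientHerm G τ) ^ 2 = (-1 : ℂ) ^ p.length := by
  rw [orientHerm_eq_mixedHerm_bot, p.entryProd_mixedHerm_sq fun u v h _ => hτ u v h]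
  simp

open Classical in
theorem SwitchEquiv.even_length_filter_mem_edgeSet [Fintype V] [DecidableEq V]
    {σ τ : V → V → ℤ} (hval : ∀ u v, G.Adj u v → ¬ T.Adj u v → σ u v = 1 ∨ σ u v = -1)
    (hτ : ∀ u v, G.Adj u v → τ u v = 1 ∨ τ u v = -1)
    (h : SwitchEquiv (mixedHerm G T σ) (orientHerm G τ)) {u : V} (c : G.Walk u u) :
    Even (c.edges.filter fun e => e ∈ T.edgeSet).length := by
  have hpow : (-1 : ℂ) ^ (c.edges.filter fun e => e ∉ T.edgeSet).length = (-1) ^ c.length := by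
    rw [← c.entryProd_mixedHerm_sq hval, ← c.entryProd_orientHerm_sq hτ]
    rcases h.entryProd_eq_or_eq_conj c with hc | hc
    · rw [hc]
    · rw [hc, ← map_pow, c.entryProd_orientHerm_sq hτ, map_pow, map_neg, map_one]
  have hsum : Even ((c.edges.filter fun e => e ∉ T.edgeSet).length + c.length) := by
    rw [← neg_one_pow_eq_one_iff_even (R := ℂ) (by norm_num), pow_add, hpow, ← pow_add,
      ← two_mul, pow_mul, neg_one_sq, one_pow]
  have hsplit :=
    c.length_edges ▸ c.edges.length_eq_length_filter_add fun e => decide (e ∈ T.edgeSet)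
  simp only [decide_not] at hsum
  rw [hsplit, Nat.even_add, Nat.even_add] at hsum
  tauto

open Classical in
theorem SimpleGraph.IsAcyclic.length_filter_mem_edgeSet_lt (hT : T.IsAcyclic) {u : V}
    {c : G.Walk u u} (hc : c.IsCycle) :
    (c.edges.filter fun e => e ∈ T.edgeSet).length < c.length := by
  refine lt_of_le_of_ne (c.length_edges ▸ List.length_filter_le _ _) fun heq => ?_
  have hmem : ∀ e ∈ c.edges, e ∈ T.edgeSet := fun e he =>
    of_decide_eq_true (List.length_filter_eq_length_iff.mp (c.length_edges ▸ heq) e he)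
  exact hT _ (hc.transfer hmem)

open Classical in
theorem SimpleGraph.Coloring.eq_of_adj_of_not_adj (hTG : T ≤ G) (hT : T.Preconnected)
    (col : T.Coloring Bool)
    (hcyc : ∀ (v : V) (c : G.Walk v v), c.IsCycle → Even c.length →
        (c.edges.filter fun x => x ∈ T.edgeSet).length ≤ c.length - 2)
    {u v : V} (huv : G.Adj u v) (hn : ¬ T.Adj u v) : col u = col v := by
  obtain ⟨p, hp⟩ := hT.exists_isPath u v
  let c : G.Walk v v := .cons huv.symm (p.mapLe hTG)
  have hvu : s(v, u) ∉ p.edges := fun he => hn (p.adj_of_mem_edges he).symm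
  have hc : c.IsCycle := by
    rw [Walk.cons_isCycle_iff, Walk.isPath_mapLe, Walk.edges_mapLe_eq_edges]
    exact ⟨hp, hvu⟩
  have htree : (c.edges.filter fun x => x ∈ T.edgeSet).length = p.length := by
    rw [Walk.edges_cons, Walk.edges_mapLe_eq_edges,
      List.filter_cons_of_neg (by simpa using fun h : T.Adj v u => hn h.symm),
      List.filter_eq_self.mpr fun e he => decide_eq_true (p.edges_subset_edgeSet he),
      p.length_edges]
  by_contra hne
  have hodd : Odd p.length :=
    (col.odd_length_iff_not_congr p).mpr (by cases h : col u <;> simp_all)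
  have hle := hcyc v c hc (by simpa [c, Nat.even_add_one] using hodd)
  rw [htree] at hle
  obtain ⟨k, hk⟩ := hodd
  simp only [c, Walk.length_cons, Walk.length_mapLe] at hle
  omega

open Classical in
theorem exists_switchEquiv_orientHerm_of_coloring [Fintype V] [DecidableEq V] (hTG : T ≤ G)
    (col : T.Coloring Bool) (hcol : ∀ u v, G.Adj u v → ¬ T.Adj u v → col u = col v)
    {σ : V → V → ℤ} (hskew : ∀ u v, σ v u = -σ u v)
    (hval : ∀ u v, G.Adj u v → ¬ T.Adj u v → σ u v = 1 ∨ σ u v = -1) :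
    ∃ τ : V → V → ℤ, (∀ u v, τ v u = -τ u v) ∧ (∀ u v, G.Adj u v → τ u v = 1 ∨ τ u v = -1) ∧
      SwitchEquiv (mixedHerm G T σ) (orientHerm G τ) := by
  let τ : V → V → ℤ := fun u v => if T.Adj u v then (if col u then -1 else 1) else σ u v
  let d : V → ℂ := fun v => if col v then Complex.I else 1
  have hd : ∀ v, d v ≠ 0 := fun v => by by_cases h : col v <;> simp [d, h]
  refine ⟨τ, fun u v => ?_, fun u v huv => ?_, d, fun v => ?_, Or.inl ?_⟩
  · by_cases ht : T.Adj u v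
    · have hv : col v = !col u := Bool.eq_not.mpr (col.valid ht).symm
      cases hu : col u <;> simp [τ, ht, ht.symm, hu, hv]
    · have ht' : ¬ T.Adj v u := fun h => ht h.symm
      simp [τ, ht, ht', hskew u v]
  · by_cases ht : T.Adj u v
    · by_cases hu : col u <;> simp [τ, ht, hu]
    · simpa [τ, ht] using hval u v huv ht
  · by_cases h : col v <;> simp [d, h]
  · ext a b
    rw [inv_diagonal_mul_mul_diagonal_apply hd]
    by_cases ht : T.Adj a b
    · have hb : col b = !col a := Bool.eq_not.mpr (col.valid ht).symm
      cases ha : col a <;> simp [mixedHerm, orientHerm, τ, d, ht, hTG ht, ha, hb]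
    by_cases hg : G.Adj a b
    · have hb := hcol a b hg ht
      cases ha : col a
      · simp [mixedHerm, orientHerm, τ, d, ht, hg, ha, ← hb]
      · simp only [mixedHerm, orientHerm, τ, d, ha, ← hb, ht, hg, of_apply, if_true, if_false,
          Complex.inv_I]
        linear_combination (-(Complex.I * σ a b)) * Complex.I_sq
    · simp [mixedHerm, orientHerm, ht, hg]

open Classical in
theorem switchEquiv_orientation_iff_even_cycles_general {V : Type*} [Fintype V] [DecidableEq V]
    (G T : SimpleGraph V) (hTG : T ≤ G) (hT : T.IsTree)
    (σ : V → V → ℤ)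
    (hskew : ∀ u v, σ v u = -σ u v)
    (hval : ∀ u v, G.Adj u v → ¬ T.Adj u v → σ u v = 1 ∨ σ u v = -1) :
    (∃ τ : V → V → ℤ,
        (∀ u v, τ v u = -τ u v) ∧
        (∀ u v, G.Adj u v → τ u v = 1 ∨ τ u v = -1) ∧
        SwitchEquiv (mixedHerm G T σ) (orientHerm G τ)) ↔
      ∀ (v : V) (c : G.Walk v v), c.IsCycle → Even c.length →
        (c.edges.filter fun x => x ∈ T.edgeSet).length ≤ c.length - 2 := by
  constructor
  · rintro ⟨τ, -, hτ, hsw⟩ v c hc hev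
    have hlt := hT.isAcyclic.length_filter_mem_edgeSet_lt hc
    obtain ⟨k, hk⟩ := hsw.even_length_filter_mem_edgeSet hval hτ c
    obtain ⟨m, hm⟩ := hev
    omega
  · intro hcyc
    let col : T.Coloring Bool := recolorOfEquiv T finTwoEquiv hT.coloringTwo
    exact exists_switchEquiv_orientHerm_of_coloring hTG col
      (fun u v huv hn => col.eq_of_adj_of_not_adj hTG hT.connected.preconnected hcyc huv hn)
      hskew hval

open Classical in
/-- For a connected graph `G` with spanning tree `T` and a partial orientation
`σ` of `G` with respect to `T`, `G_T^σ` is switching equivalent to some complete orientation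
of `G` if and only if for every even cycle `C` of `G`, `T` contains at most `|C| - 2`
edges of `C`. -/
theorem switchEquiv_orientation_iff_even_cycles {V : Type*} [Fintype V] [DecidableEq V]
    (G T : SimpleGraph V) (hG : G.Connected) (hTG : T ≤ G) (hT : T.IsTree)
    (σ : V → V → ℤ)
    (hskew : ∀ u v, σ v u = -σ u v)
    (hval : ∀ u v, G.Adj u v → ¬ T.Adj u v → σ u v = 1 ∨ σ u v = -1) :
    (∃ τ : V → V → ℤ,
        (∀ u v, τ v u = -τ u v) ∧
        (∀ u v, G.Adj u v → τ u v = 1 ∨ τ u v = -1) ∧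
        SwitchEquiv (mixedHerm G T σ) (orientHerm G τ)) ↔
      ∀ (v : V) (c : G.Walk v v), c.IsCycle → Even c.length →
        (c.edges.filter fun x => x ∈ T.edgeSet).length ≤ c.length - 2 :=
  switchEquiv_orientation_iff_even_cycles_general G T hTG hT σ hskew hval
end

section
/- Let S_1, …, S_m be finite sets and let {f_{s_1,…,s_m}} be an interlacing family of real-rooted polynomials of the same degree with positive leading coefficients. Then there exists an assignment (s_1,…,s_m) ∈ S_1 × ⋯ × S_m such that the largest root of f_{s_1,…,s_m} is at most the largest root of f_∅ := Σ_{(t_1,…,t_m) ∈ S_1 × ⋯ × S_m} f_{t_1,…,t_m}. -/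
open Polynomial

/-- `g = c·Π_{j=1}^{n}(X − α_j)` interlaces `f = d·Π_{j=1}^{n+1}(X − β_j)` if
`β_1 ≤ α_1 ≤ β_2 ≤ α_2 ≤ … ≤ α_n ≤ β_{n+1}`. -/
def Interlaces (g f : Polynomial ℝ) : Prop :=
  ∃ (n : ℕ) (c d : ℝ) (α : Fin n → ℝ) (β : Fin (n + 1) → ℝ),
    c ≠ 0 ∧ d ≠ 0 ∧
    g = C c * ∏ j, (X - C (α j)) ∧
    f = C d * ∏ j, (X - C (β j)) ∧
    ∀ j : Fin n, β j.castSucc ≤ α j ∧ α j ≤ β j.succ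

/-- A real polynomial has only real roots (as a polynomial over `ℂ`). -/
def RealRooted (p : Polynomial ℝ) : Prop :=
  ∀ z : ℂ, Polynomial.aeval z p = 0 → z.im = 0

/-!
Walk down the tree of partial assignments one coordinate at a time. The children `f_{s,u}` of a
node `f_s = Σ_u f_{s,u}` have a common interlacing `g`, so each child is nonpositive between the
largest root of `g` and its own largest root. At the smallest of the children's largest roots
every child, hence `f_s`, is therefore nonpositive, and `f_s` has a root there or further right:
that child's largest root is at most `f_s`'s. Chaining these inequalities from `f_∅` to a leaf
gives the theorem.
-/

namespace Polynomial

variable {R : Type*}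

theorem leadingCoeff_add_pos [Semiring R] [LinearOrder R] [IsStrictOrderedRing R] {p q : R[X]}
    (hp : 0 < p.leadingCoeff) (hq : 0 < q.leadingCoeff) : 0 < (p + q).leadingCoeff := by
  rcases lt_trichotomy p.degree q.degree with hlt | heq | hgt
  · rwa [leadingCoeff_add_of_degree_lt hlt]
  · rw [leadingCoeff_add_of_degree_eq heq (add_pos hp hq).ne']
    exact add_pos hp hq
  · rwa [leadingCoeff_add_of_degree_lt' hgt]

theorem leadingCoeff_sum_pos [Semiring R] [LinearOrder R] [IsStrictOrderedRing R] {ι : Type*}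
    {s : Finset ι} (hs : s.Nonempty) {F : ι → R[X]} (hF : ∀ i ∈ s, 0 < (F i).leadingCoeff) :
    0 < (∑ i ∈ s, F i).leadingCoeff := by
  induction hs using Finset.Nonempty.cons_induction with
  | singleton i => simpa using hF i (Finset.mem_singleton_self i)
  | cons i s hi hs ih =>
    rw [Finset.sum_cons]
    exact leadingCoeff_add_pos (hF i (Finset.mem_cons_self i s))
      (ih fun j hj => hF j (Finset.mem_cons_of_mem hj))

theorem isRoot_C_mul_prod_X_sub_C [CommRing R] [IsDomain R] {ι : Type*} [Fintype ι] {d : R}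
    (hd : d ≠ 0) (β : ι → R) {x : R} :
    (C d * ∏ j, (X - C (β j))).IsRoot x ↔ ∃ j, x = β j := by
  simp [eval_prod, Finset.prod_eq_zero_iff, sub_eq_zero, hd]

end Polynomial

/-- The largest real root of `p` is at most that of `q`, reading `max ∅ = -∞` and, for `q = 0`,
`max ℝ = +∞`. -/
def MaxRootLE (p q : ℝ[X]) : Prop :=
  ∀ x, p.IsRoot x → ∃ y, q.IsRoot y ∧ x ≤ y

namespace MaxRootLE

theorem refl (p : ℝ[X]) : MaxRootLE p p := fun x hx => ⟨x, hx, le_rfl⟩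

theorem trans {p q r : ℝ[X]} (hpq : MaxRootLE p q) (hqr : MaxRootLE q r) : MaxRootLE p r := by
  intro x hx
  obtain ⟨y, hy, hxy⟩ := hpq x hx
  obtain ⟨z, hz, hyz⟩ := hqr y hy
  exact ⟨z, hz, hxy.trans hyz⟩

theorem le_csSup {p q : ℝ[X]} (h : MaxRootLE p q) (hq : q ≠ 0) {x : ℝ} (hx : p.IsRoot x) :
    x ≤ sSup {y | q.IsRoot y} := by
  obtain ⟨y, hy, hxy⟩ := h x hx
  exact hxy.trans (_root_.le_csSup (finite_setOfPred_isRoot hq).bddAbove hy)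

end MaxRootLE

namespace Interlaces

variable {g f : ℝ[X]}

theorem exists_isGreatest_root (h : Interlaces g f) :
    ∃ b, IsGreatest {x | f.IsRoot x} b ∧ ∀ a, g.IsRoot a → a ≤ b := by
  obtain ⟨n, c, d, α, β, hc, hd, rfl, rfl, hαβ⟩ := h
  have hβ : Monotone β := Fin.monotone_iff_le_succ.2 fun j => (hαβ j).1.trans (hαβ j).2
  refine ⟨β (Fin.last n), ⟨(isRoot_C_mul_prod_X_sub_C hd β).2 ⟨_, rfl⟩, ?_⟩, ?_⟩
  · rintro x hx
    obtain ⟨j, rfl⟩ := (isRoot_C_mul_prod_X_sub_C hd β).1 hx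
    exact hβ (Fin.le_last j)
  · intro a ha
    obtain ⟨j, rfl⟩ := (isRoot_C_mul_prod_X_sub_C hc α).1 ha
    exact (hαβ j).2.trans (hβ (Fin.le_last _))

/-- Between the largest root of `g` and that of `f`, only the factor `x - β_{n+1}` is negative. -/
theorem eval_nonpos (h : Interlaces g f) (hf : 0 < f.leadingCoeff) {x b : ℝ}
    (hgx : ∀ a, g.IsRoot a → a ≤ x) (hb : f.IsRoot b) (hxb : x ≤ b) : f.eval x ≤ 0 := by
  obtain ⟨n, c, d, α, β, hc, hd, rfl, rfl, hαβ⟩ := h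
  have hβ : Monotone β := Fin.monotone_iff_le_succ.2 fun j => (hαβ j).1.trans (hαβ j).2
  have hd_pos : 0 < d := by simpa [leadingCoeff_mul, leadingCoeff_prod] using hf
  obtain ⟨k, rfl⟩ := (isRoot_C_mul_prod_X_sub_C hd β).1 hb
  have hinit : 0 ≤ ∏ j : Fin n, (x - β j.castSucc) := Finset.prod_nonneg fun j _ =>
    sub_nonneg.2 ((hαβ j).1.trans (hgx _ ((isRoot_C_mul_prod_X_sub_C hc α).2 ⟨j, rfl⟩)))
  have hlast : x - β (Fin.last n) ≤ 0 := sub_nonpos.2 (hxb.trans (hβ (Fin.le_last k)))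
  simp only [eval_mul, eval_C, eval_prod, eval_sub, eval_X, Fin.prod_univ_castSucc]
  exact mul_nonpos_of_nonneg_of_nonpos hd_pos.le (mul_nonpos_of_nonneg_of_nonpos hinit hlast)

end Interlaces

theorem exists_maxRootLE_sum_of_interlaces {ι : Type*} {s : Finset ι} (hs : s.Nonempty)
    {F : ι → ℝ[X]} {g : ℝ[X]} (hpos : ∀ i ∈ s, 0 < (F i).leadingCoeff)
    (hg : ∀ i ∈ s, Interlaces g (F i)) : ∃ i ∈ s, MaxRootLE (F i) (∑ j ∈ s, F j) := by
  choose! B hB hgB using fun i hi => (hg i hi).exists_isGreatest_root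
  obtain ⟨i, hi, hmin⟩ := s.exists_min_image B hs
  have hsum : (∑ j ∈ s, F j).eval (B i) ≤ 0 := by
    rw [eval_finsetSum]
    exact Finset.sum_nonpos fun j hj =>
      (hg j hj).eval_nonpos (hpos j hj) (hgB i hi) (hB j hj).1 (hmin j hj)
  obtain ⟨y, hy, hBy⟩ : ∃ y, (∑ j ∈ s, F j).IsRoot y ∧ B i ≤ y := by
    by_contra! h
    exact (zero_lt_eval_of_roots_lt_of_leadingCoeff_nonneg h
      (leadingCoeff_sum_pos hs hpos).le).not_ge hsum
  exact ⟨i, hi, fun x hx => ⟨y, hy, ((hB i hi).2 hx).trans hBy⟩⟩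

theorem exists_mem_piFinset_extend {α : Type*} {m : ℕ} {S : Fin m → Finset α}
    (hS : ∀ i, (S i).Nonempty) {k : ℕ} (hk : k ≤ m)
    {s : Fin k → α} (hs : ∀ i, s i ∈ S (Fin.castLE hk i)) :
    ∃ t ∈ Fintype.piFinset S, ∀ i, t (Fin.castLE hk i) = s i := by
  obtain ⟨t₀, ht₀⟩ := Fintype.piFinset_nonempty.2 hS
  refine ⟨fun j => if h : (j : ℕ) < k then s ⟨j, h⟩ else t₀ j, ?_, fun i => dif_pos i.isLt⟩
  refine Fintype.mem_piFinset.2 fun j => ?_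
  split_ifs with h
  · exact hs ⟨j, h⟩
  · exact Fintype.mem_piFinset.1 ht₀ j

section PartialSums

variable {α : Type*} [DecidableEq α] {m : ℕ} (S : Fin m → Finset α) (f : (Fin m → α) → ℝ[X])

/-- The paper's `f_{s_1,…,s_k}`. -/
noncomputable def partialSum {k : ℕ} (hk : k ≤ m) (s : Fin k → α) : ℝ[X] :=
  ∑ t ∈ (Fintype.piFinset S).filter (fun t => ∀ i : Fin k, t (Fin.castLE hk i) = s i), f t

def IsInterlacingFamily : Prop :=
  ∀ (k : ℕ) (hk : k < m) (s : Fin k → α), (∀ i : Fin k, s i ∈ S (Fin.castLE hk.le i)) →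
    ∃ g : ℝ[X], ∀ u ∈ S ⟨k, hk⟩, Interlaces g (partialSum S f hk (Fin.snoc s u))

theorem partialSum_zero (s : Fin 0 → α) :
    partialSum S f (Nat.zero_le m) s = ∑ t ∈ Fintype.piFinset S, f t := by
  simp [partialSum]

theorem partialSum_self {t : Fin m → α} (ht : t ∈ Fintype.piFinset S) :
    partialSum S f le_rfl t = f t := by
  simp [partialSum, ← funext_iff, Finset.filter_eq', ht]

theorem sum_partialSum_snoc {k : ℕ} (hk : k < m) (s : Fin k → α) :
    ∑ u ∈ S ⟨k, hk⟩, partialSum S f hk (Fin.snoc s u) = partialSum S f hk.le s := by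
  rw [partialSum, ← Finset.sum_fiberwise_of_maps_to (g := fun t => t ⟨k, hk⟩)
    fun t ht => Fintype.mem_piFinset.1 (Finset.mem_filter.1 ht).1 _]
  refine Finset.sum_congr rfl fun u _ => ?_
  rw [partialSum, Finset.filter_filter]
  congr! 2 with t
  simp only [Fin.forall_fin_succ', Fin.snoc_castSucc, Fin.snoc_last, Fin.castLE_castSucc]
  rfl

theorem leadingCoeff_partialSum_pos (hS : ∀ i, (S i).Nonempty)
    (hlead : ∀ t ∈ Fintype.piFinset S, 0 < (f t).leadingCoeff) {k : ℕ} (hk : k ≤ m)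
    {s : Fin k → α} (hs : ∀ i, s i ∈ S (Fin.castLE hk i)) :
    0 < (partialSum S f hk s).leadingCoeff := by
  obtain ⟨t, ht, hts⟩ := exists_mem_piFinset_extend hS hk hs
  exact leadingCoeff_sum_pos ⟨t, Finset.mem_filter.2 ⟨ht, hts⟩⟩
    fun t ht => hlead t (Finset.mem_filter.1 ht).1

theorem exists_assignment_maxRootLE (hS : ∀ i, (S i).Nonempty)
    (hlead : ∀ t ∈ Fintype.piFinset S, 0 < (f t).leadingCoeff) (hIF : IsInterlacingFamily S f) :
    ∀ (k : ℕ) (hk : k ≤ m), ∃ s : Fin k → α, (∀ i, s i ∈ S (Fin.castLE hk i)) ∧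
      MaxRootLE (partialSum S f hk s) (∑ t ∈ Fintype.piFinset S, f t)
  | 0, _ => ⟨Fin.elim0, fun i => i.elim0, by rw [partialSum_zero]; exact MaxRootLE.refl _⟩
  | k + 1, hk => by
    obtain ⟨s, hs, hs_root⟩ := exists_assignment_maxRootLE hS hlead hIF k (Nat.le_of_succ_le hk)
    obtain ⟨g, hg⟩ := hIF k hk s hs
    have hsnoc : ∀ u ∈ S ⟨k, hk⟩, ∀ i, (Fin.snoc s u : Fin (k + 1) → α) i ∈ S (Fin.castLE hk i) :=
      fun u hu => Fin.forall_fin_succ'.2 ⟨by simpa using hs, by rw [Fin.snoc_last]; exact hu⟩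
    obtain ⟨u, hu, hu_root⟩ := exists_maxRootLE_sum_of_interlaces (hS _)
      (fun u hu => leadingCoeff_partialSum_pos S f hS hlead hk (hsnoc u hu)) hg
    rw [sum_partialSum_snoc] at hu_root
    exact ⟨Fin.snoc s u, hsnoc u hu, hu_root.trans hs_root⟩

end PartialSums

open Classical in
theorem interlacing_family_exists_assignment_general {α : Type*} [DecidableEq α]
    (m : ℕ) (S : Fin m → Finset α) (hS : ∀ i, (S i).Nonempty)
    (f : (Fin m → α) → Polynomial ℝ)
    (hlead : ∀ t ∈ Fintype.piFinset S, 0 < (f t).leadingCoeff)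
    (hIF : ∀ (k : ℕ) (hk : k < m) (s : Fin k → α),
      (∀ i : Fin k, s i ∈ S (Fin.castLE hk.le i)) →
      ∃ g : Polynomial ℝ, ∀ u ∈ S ⟨k, hk⟩,
        Interlaces g (∑ t ∈ (Fintype.piFinset S).filter
          (fun t => ∀ i : Fin (k + 1), t (Fin.castLE hk i) = (Fin.snoc s u : Fin (k + 1) → α) i), f t)) :
    ∃ t ∈ Fintype.piFinset S, ∀ x : ℝ, (f t).IsRoot x →
      x ≤ sSup {y : ℝ | (∑ t' ∈ Fintype.piFinset S, f t').IsRoot y} := by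
  obtain ⟨t, ht, ht_root⟩ := exists_assignment_maxRootLE S f hS hlead hIF m le_rfl
  have ht_mem : t ∈ Fintype.piFinset S := Fintype.mem_piFinset.2 ht
  have hsum : ∑ t' ∈ Fintype.piFinset S, f t' ≠ 0 := leadingCoeff_ne_zero.1
    (leadingCoeff_sum_pos (Fintype.piFinset_nonempty.2 hS) hlead).ne'
  rw [partialSum_self S f ht_mem] at ht_root
  exact ⟨t, ht_mem, fun x hx => ht_root.le_csSup hsum hx⟩

open Classical in
/-- if `{f_s : s ∈ S_1 × ⋯ × S_m}` is an interlacing family of real-rooted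
polynomials of the same degree with positive leading coefficients, then some assignment
`t` has the largest root of `f_t` at most the largest root of `f_∅ = Σ_t f_t`. -/
theorem interlacing_family_exists_assignment {α : Type*} [DecidableEq α]
    (m n : ℕ) (S : Fin m → Finset α) (hS : ∀ i, (S i).Nonempty)
    (f : (Fin m → α) → Polynomial ℝ)
    (hdeg : ∀ t ∈ Fintype.piFinset S, (f t).natDegree = n)
    (hlead : ∀ t ∈ Fintype.piFinset S, 0 < (f t).leadingCoeff)
    (hrr : ∀ t ∈ Fintype.piFinset S, RealRooted (f t))
    (hIF : ∀ (k : ℕ) (hk : k < m) (s : Fin k → α),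
      (∀ i : Fin k, s i ∈ S (Fin.castLE hk.le i)) →
      ∃ g : Polynomial ℝ, ∀ u ∈ S ⟨k, hk⟩,
        Interlaces g (∑ t ∈ (Fintype.piFinset S).filter
          (fun t => ∀ i : Fin (k + 1), t (Fin.castLE hk i) = (Fin.snoc s u : Fin (k + 1) → α) i), f t)) :
    ∃ t ∈ Fintype.piFinset S, ∀ x : ℝ, (f t).IsRoot x →
      x ≤ sSup {y : ℝ | (∑ t' ∈ Fintype.piFinset S, f t').IsRoot y} :=
  interlacing_family_exists_assignment_general m S hS f hlead hIF
end

section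
/- Let a_1, …, a_m, b_1, …, b_m be vectors in ℂ^n, let D be a Hermitian positive semidefinite n×n matrix, and let p_1, …, p_m be real numbers in [0,1]. Then the polynomial Σ_{S ⊆ [m]} (Π_{j∈S} p_j)(Π_{j∉S} (1−p_j)) · det(xI + D + Σ_{j∈S} a_j a_j^* + Σ_{j∉S} b_j b_j^*) has only real roots. -/
/-!
Put a variable `y_i` in front of every rank-one term: for `Im x > 0` the function
`F y = det (x I + D + Σ_i y_i u_i u_i^*)` is affine in each `y_i` and has no zero with all
`Im y_i ≥ 0`, since the quadratic form of the matrix has positive imaginary part. The polynomial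
at `x` is the expectation of `F (y + e)` at `y = 0`, where for each `j` independently `e` is the
unit vector of `a_j` with probability `p_j` and that of `b_j` otherwise. One such averaging step
keeps both properties: if `F z = c ≠ 0` and `F` has slope `B` in a coordinate, then a unit shift
gives `c (1 + B / c)`, and `B / c` is `0` or lies in the open lower half-plane because the zero
of the affine map lies below the real axis; a convex combination of two such numbers is never
`-1`. So there are no roots with `Im x > 0`, and conjugation symmetry excludes `Im x < 0`.
-/

open Polynomial
open scoped ComplexOrder

open Matrix Finset

namespace Matrix

variable {n R : Type*} [Fintype n] [DecidableEq n] [CommRing R]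

theorem exists_det_add_smul_vecMulVec (M : Matrix n n R) (u v : n → R) :
    ∃ A B : R, ∀ s : R, (M + s • vecMulVec u v).det = A + B * s := by
  -- `M + s • u vᵀ` is a Schur complement of a bordered matrix in which `s` occurs in one row only
  let N : Matrix (n ⊕ Unit) (n ⊕ Unit) R := fromBlocks M (replicateCol Unit u) 0 1
  let r : n ⊕ Unit → R := Sum.elim (-v) 0
  refine ⟨N.det, (N.updateRow (Sum.inr ()) r).det, fun s => ?_⟩
  have hblock : fromBlocks M (replicateCol Unit u) (replicateRow Unit (-(s • v))) 1 =
      N.updateRow (Sum.inr ()) (N (Sum.inr ()) + s • r) := by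
    ext (i | i) (j | j) <;> simp [N, r, updateRow_apply]
  have hrank : replicateCol Unit u * replicateRow Unit (-(s • v)) = -(s • vecMulVec u v) := by
    rw [← vecMulVec_eq]
    ext i j
    simp [vecMulVec_apply, mul_left_comm]
  rw [← sub_neg_eq_add, ← hrank, ← det_fromBlocks_one₂₂, hblock, det_updateRow_add,
    det_updateRow_smul, updateRow_eq_self, mul_comm]

lemma det_ne_zero_of_forall_im_pos {M : Matrix n n ℂ}
    (h : ∀ v : n → ℂ, v ≠ 0 → 0 < (star v ⬝ᵥ M *ᵥ v).im) : M.det ≠ 0 := by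
  intro hdet
  obtain ⟨v, hv, hMv⟩ := exists_mulVec_eq_zero_iff.mpr hdet
  simpa [hMv] using h v hv

lemma IsHermitian.star_det_smul_one_add {M : Matrix n n ℂ} (hM : M.IsHermitian) (x : ℂ) :
    star (x • 1 + M).det = (star x • 1 + M).det := by
  rw [← det_conjTranspose, conjTranspose_add, conjTranspose_smul, conjTranspose_one, hM.eq]

end Matrix

namespace Complex

lemma im_mul_nonneg {c q : ℂ} (hc : 0 ≤ c.im) (hq : 0 ≤ q) : 0 ≤ (c * q).im := by
  obtain ⟨hre, him⟩ := nonneg_iff.1 hq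
  rw [mul_im, ← him, mul_zero, zero_add]
  exact mul_nonneg hc hre

lemma im_mul_pos {c q : ℂ} (hc : 0 < c.im) (hq : 0 < q) : 0 < (c * q).im := by
  obtain ⟨hre, him⟩ := pos_iff.1 hq
  rw [mul_im, ← him, mul_zero, zero_add]
  exact mul_pos hc hre

lemma im_div_neg_or_eq_zero {A B s : ℂ} (h : ∀ t : ℂ, 0 ≤ t.im → A + B * t ≠ 0)
    (hs : 0 ≤ s.im) : (B / (A + B * s)).im < 0 ∨ B / (A + B * s) = 0 := by
  rcases eq_or_ne B 0 with rfl | hB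
  · simp
  left
  have hroot : (-A / B).im < 0 := by
    by_contra! hr
    exact h _ hr (by field_simp; ring)
  have hpos : 0 < (s - -A / B).im := by rw [sub_im]; linarith
  have hinv : B / (A + B * s) = (s - -A / B)⁻¹ := by
    rw [← inv_div]
    congr 1
    field_simp
    ring
  rw [hinv, inv_im]
  exact div_neg_of_neg_of_pos (neg_neg_of_pos hpos)
    (normSq_pos.mpr fun h0 => by simp [h0] at hpos)

lemma one_add_convex_comb_ne_zero {p : ℝ} (hp0 : 0 ≤ p) (hp1 : p ≤ 1) {u v : ℂ}
    (hu : u.im < 0 ∨ u = 0) (hv : v.im < 0 ∨ v = 0) : 1 + p * u + (1 - p) * v ≠ 0 := by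
  intro h
  have him := congrArg im h
  have hre := congrArg re h
  simp only [add_im, add_re, one_im, one_re, zero_im, zero_re, mul_im, mul_re, ofReal_re,
    ofReal_im, sub_re, sub_im] at him hre
  rcases hu with hu | rfl <;> rcases hv with hv | rfl
  · have hpu : p * u.im = 0 := by
      nlinarith [mul_nonpos_of_nonneg_of_nonpos hp0 hu.le,
        mul_nonpos_of_nonneg_of_nonpos (sub_nonneg.2 hp1) hv.le]
    have hp : p = 0 := (mul_eq_zero.1 hpu).resolve_right hu.ne
    subst hp
    simp at him
    linarith
  · have hp : p = 0 := by simpa [hu.ne] using him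
    simp [hp] at hre
  · have hp : 1 - p = 0 := by simpa [hv.ne] using him
    simp [hp] at hre
  · simp at hre

end Complex

section Multiaffine

variable {ι R : Type*} [DecidableEq ι] [CommRing R]

def IsMultiaffine (F : (ι → R) → R) : Prop :=
  ∀ z i, ∃ A B : R, ∀ s, F (Function.update z i s) = A + B * s

lemma Pi.add_single_eq_update (z : ι → R) (i : ι) (c : R) :
    z + Pi.single i c = Function.update z i (z i + c) := by
  rw [Pi.update_eq_sub_add_single, Pi.single_add]
  abel

namespace IsMultiaffine

variable {F G : (ι → R) → R}

lemma comp_add_right (hF : IsMultiaffine F) (v : ι → R) : IsMultiaffine fun z => F (z + v) := by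
  intro z i
  obtain ⟨A, B, h⟩ := hF (z + v) i
  refine ⟨A + B * v i, B, fun s => ?_⟩
  dsimp only
  rw [← Function.update_eq_self i v, ← Function.update_add, Function.update_eq_self, h]
  ring

lemma add (hF : IsMultiaffine F) (hG : IsMultiaffine G) : IsMultiaffine fun z => F z + G z := by
  intro z i
  obtain ⟨A, B, h⟩ := hF z i
  obtain ⟨A', B', h'⟩ := hG z i
  exact ⟨A + A', B + B', fun s => by dsimp only; rw [h, h']; ring⟩

lemma const_mul (hF : IsMultiaffine F) (c : R) : IsMultiaffine fun z => c * F z := by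
  intro z i
  obtain ⟨A, B, h⟩ := hF z i
  exact ⟨c * A, c * B, fun s => by dsimp only; rw [h]; ring⟩

end IsMultiaffine

end Multiaffine

section ZeroFree

variable {ι : Type*} [DecidableEq ι]

def ZeroFreeOnClosedUpper (F : (ι → ℂ) → ℂ) : Prop :=
  ∀ z : ι → ℂ, (∀ i, 0 ≤ (z i).im) → F z ≠ 0

def mix (p : ℝ) (i j : ι) (F : (ι → ℂ) → ℂ) (z : ι → ℂ) : ℂ :=
  p * F (z + Pi.single i 1) + (1 - p) * F (z + Pi.single j 1)

variable {F : (ι → ℂ) → ℂ}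

lemma IsMultiaffine.mix (hF : IsMultiaffine F) (p : ℝ) (i j : ι) :
    IsMultiaffine (mix p i j F) :=
  ((hF.comp_add_right _).const_mul _).add ((hF.comp_add_right _).const_mul _)

lemma ZeroFreeOnClosedUpper.mix (hF : IsMultiaffine F) (hF0 : ZeroFreeOnClosedUpper F)
    {p : ℝ} (hp0 : 0 ≤ p) (hp1 : p ≤ 1) (i j : ι) : ZeroFreeOnClosedUpper (mix p i j F) := by
  intro z hz
  have hc : F z ≠ 0 := hF0 z hz
  have hshift : ∀ k, ∃ B, F (z + Pi.single k 1) = F z + B ∧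
      ((B / F z).im < 0 ∨ B / F z = 0) := by
    intro k
    obtain ⟨A, B, hline⟩ := hF z k
    have hz' : F z = A + B * z k := by rw [← hline, Function.update_eq_self]
    refine ⟨B, by rw [Pi.add_single_eq_update, hline, hz']; ring, ?_⟩
    rw [hz']
    refine Complex.im_div_neg_or_eq_zero (fun t ht => ?_) (hz k)
    rw [← hline]
    exact hF0 _ ((Function.forall_update_iff z fun _ w => 0 ≤ w.im).2 ⟨ht, fun l _ => hz l⟩)
  obtain ⟨B, hB, hBc⟩ := hshift i
  obtain ⟨B', hB', hB'c⟩ := hshift j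
  have hfactor : _root_.mix p i j F z =
      F z * (1 + p * (B / F z) + (1 - p) * (B' / F z)) := by
    rw [_root_.mix, hB, hB']
    field_simp
    ring
  rw [hfactor]
  exact mul_ne_zero hc (Complex.one_add_convex_comb_ne_zero hp0 hp1 hBc hB'c)

end ZeroFree

section CoinAverage

variable {κ : Type*} [DecidableEq κ]

/-- The expectation of `F` at `z` when, independently for each `j ∈ T`, coordinate `inl j` is
shifted by one with probability `p j` and coordinate `inr j` otherwise. -/
def coinAverage (p : κ → ℝ) (T : Finset κ) (F : (κ ⊕ κ → ℂ) → ℂ) (z : κ ⊕ κ → ℂ) : ℂ :=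
  ∑ S ∈ T.powerset, ((∏ j ∈ S, (p j : ℂ)) * ∏ j ∈ T \ S, (1 - (p j : ℂ))) *
    F (z + ∑ j ∈ S, Pi.single (Sum.inl j) 1 + ∑ j ∈ T \ S, Pi.single (Sum.inr j) 1)

variable (p : κ → ℝ) (F : (κ ⊕ κ → ℂ) → ℂ)

@[simp]
lemma coinAverage_empty : coinAverage p ∅ F = F := by
  ext z
  simp [coinAverage]

lemma coinAverage_insert {k : κ} {T : Finset κ} (hk : k ∉ T) :
    coinAverage p (insert k T) F = coinAverage p T (mix (p k) (Sum.inl k) (Sum.inr k) F) := by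
  ext z
  simp only [coinAverage, mix, sum_powerset_insert hk, mul_add, sum_add_distrib]
  rw [add_comm]
  congr 1 <;> refine sum_congr rfl fun S hS => ?_
  · have hkS : k ∉ S := fun h => hk (mem_powerset.1 hS h)
    rw [insert_sdiff_insert, sdiff_insert_of_notMem hk, prod_insert hkS, sum_insert hkS]
    simp only [← mul_assoc]
    congr 1
    · ring
    · exact congrArg F (by abel)
  · have hkS : k ∉ T \ S := fun h => hk (mem_sdiff.1 h).1
    rw [insert_sdiff_of_notMem _ (fun h => hk (mem_powerset.1 hS h)), prod_insert hkS,
      sum_insert hkS]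
    simp only [← mul_assoc]
    congr 1
    · ring
    · exact congrArg F (by abel)

lemma ZeroFreeOnClosedUpper.coinAverage {p : κ → ℝ} (hp : ∀ j, p j ∈ Set.Icc (0 : ℝ) 1)
    (T : Finset κ) {F : (κ ⊕ κ → ℂ) → ℂ} (hF : IsMultiaffine F) (hF0 : ZeroFreeOnClosedUpper F) :
    ZeroFreeOnClosedUpper (coinAverage p T F) := by
  induction T using Finset.induction_on generalizing F with
  | empty => simpa using hF0
  | insert k T hk ih =>
    rw [coinAverage_insert p F hk]
    exact ih (hF.mix _ _ _) (hF0.mix hF (hp k).1 (hp k).2 _ _)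

end CoinAverage

section DetPencil

variable {n ι : Type*} [Fintype n] [DecidableEq n] [Fintype ι]

def detPencil (x : ℂ) (D : Matrix n n ℂ) (P : ι → Matrix n n ℂ) (y : ι → ℂ) : ℂ :=
  (x • 1 + D + Fintype.linearCombination ℂ P y).det

lemma isMultiaffine_detPencil_vecMulVec [DecidableEq ι] (x : ℂ) (D : Matrix n n ℂ)
    (u v : ι → n → ℂ) :
    IsMultiaffine (detPencil x D fun i => vecMulVec (u i) (v i)) := by
  intro y i
  obtain ⟨A, B, h⟩ := exists_det_add_smul_vecMulVec
    (x • 1 + D + Fintype.linearCombination ℂ (fun i => vecMulVec (u i) (v i))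
      (Function.update y i 0)) (u i) (v i)
  refine ⟨A, B, fun s => ?_⟩
  have hsplit : Function.update y i s = Function.update y i 0 + Pi.single i s := by
    rw [Pi.add_single_eq_update, Function.update_idem, Function.update_self, zero_add]
  rw [detPencil, ← h, hsplit, map_add, Fintype.linearCombination_apply_single, ← add_assoc]

lemma zeroFreeOnClosedUpper_detPencil {x : ℂ} (hx : 0 < x.im) {D : Matrix n n ℂ}
    (hD : D.IsHermitian) {P : ι → Matrix n n ℂ} (hP : ∀ i, (P i).PosSemidef) :
    ZeroFreeOnClosedUpper (detPencil x D P) := by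
  intro y hy
  refine det_ne_zero_of_forall_im_pos fun v hv => ?_
  simp only [add_mulVec, smul_mulVec, one_mulVec, Fintype.linearCombination_apply, sum_mulVec,
    dotProduct_add, dotProduct_smul, dotProduct_sum, smul_eq_mul, Complex.add_im, Complex.im_sum]
  have hD0 : (star v ⬝ᵥ D *ᵥ v).im = 0 := hD.im_star_dotProduct_mulVec_self v
  rw [hD0, add_zero]
  exact add_pos_of_pos_of_nonneg (Complex.im_mul_pos hx (dotProduct_star_self_pos_iff.2 hv))
    (sum_nonneg fun i _ => Complex.im_mul_nonneg (hy i) ((hP i).dotProduct_mulVec_nonneg v))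

end DetPencil

lemma Polynomial.eval_det_X_smul_one_add_map_C {n : Type*} [Fintype n] [DecidableEq n]
    (N : Matrix n n ℂ) (x : ℂ) :
    eval x ((X : ℂ[X]) • (1 : Matrix n n ℂ[X]) + N.map C).det = (x • 1 + N).det := by
  rw [← coe_evalRingHom, RingHom.map_det]
  congr 1
  ext i j
  by_cases h : i = j <;> simp [h]

lemma coinAverage_univ_detPencil_zero {n κ : Type*} [Fintype n] [DecidableEq n] [Fintype κ]
    [DecidableEq κ] (p : κ → ℝ) (x : ℂ) (D : Matrix n n ℂ) (P : κ ⊕ κ → Matrix n n ℂ) :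
    coinAverage p univ (detPencil x D P) 0 =
      ∑ S : Finset κ, ((∏ j ∈ S, (p j : ℂ)) * ∏ j ∈ Sᶜ, (1 - (p j : ℂ))) *
        (x • 1 + (D + ∑ j ∈ S, P (Sum.inl j) + ∑ j ∈ Sᶜ, P (Sum.inr j))).det := by
  rw [coinAverage, powerset_univ]
  refine sum_congr rfl fun S _ => ?_
  simp only [detPencil, compl_eq_univ_sdiff, zero_add, map_add, map_sum,
    Fintype.linearCombination_apply_single, one_smul, add_assoc]

/-- Marcus–Spielman–Srivastava: for vectors `a_1,…,a_m, b_1,…,b_m ∈ ℂ^n`, a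
Hermitian positive semidefinite matrix `D`, and probabilities `p_1,…,p_m ∈ [0,1]`, the
polynomial `Σ_{S ⊆ [m]} (Π_{j∈S} p_j)(Π_{j∉S} (1−p_j)) det(xI + D + Σ_{j∈S} a_j a_j^* +
Σ_{j∉S} b_j b_j^*)` has only real roots. -/
theorem mixed_characteristic_real_rooted (n m : ℕ)
    (a b : Fin m → (Fin n → ℂ)) (D : Matrix (Fin n) (Fin n) ℂ) (hD : D.PosSemidef)
    (p : Fin m → ℝ) (hp : ∀ j, p j ∈ Set.Icc (0 : ℝ) 1) :
    ∀ z : ℂ,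
      (∑ S : Finset (Fin m),
        Polynomial.C (((∏ j ∈ S, (p j : ℂ)) * ∏ j ∈ Sᶜ, (1 - (p j : ℂ)))) *
          ((X : Polynomial ℂ) • (1 : Matrix (Fin n) (Fin n) (Polynomial ℂ)) +
            (D + (∑ j ∈ S, Matrix.vecMulVec (a j) (star (a j))) +
              ∑ j ∈ Sᶜ, Matrix.vecMulVec (b j) (star (b j))).map Polynomial.C).det).IsRoot z →
      z.im = 0 := by
  intro z hz
  set M : Finset (Fin m) → Matrix (Fin n) (Fin n) ℂ := fun S =>
    D + ∑ j ∈ S, vecMulVec (a j) (star (a j)) + ∑ j ∈ Sᶜ, vecMulVec (b j) (star (b j))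
  set w : Finset (Fin m) → ℂ := fun S => (∏ j ∈ S, (p j : ℂ)) * ∏ j ∈ Sᶜ, (1 - (p j : ℂ))
  set g : ℂ → ℂ := fun x => ∑ S, w S * (x • 1 + M S).det
  have hroot : g z = 0 := by
    simpa only [IsRoot.def, eval_finsetSum, eval_mul, eval_C,
      Polynomial.eval_det_X_smul_one_add_map_C] using hz
  let u : Fin m ⊕ Fin m → Fin n → ℂ := Sum.elim a b
  have hupper : ∀ x : ℂ, 0 < x.im → g x ≠ 0 := fun x hx => by
    have h := (zeroFreeOnClosedUpper_detPencil hx hD.isHermitian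
      fun i => posSemidef_vecMulVec_self_star (u i)).coinAverage hp univ
      (isMultiaffine_detPencil_vecMulVec x D u fun i => star (u i)) 0 (fun _ => le_rfl)
    simpa [coinAverage_univ_detPencil_zero, u] using h
  have hconj : ∀ x, star (g x) = g (star x) := fun x => by
    have hM : ∀ S, (M S).IsHermitian := fun S =>
      ((hD.add (posSemidef_sum _ fun j _ => posSemidef_vecMulVec_self_star _)).add
        (posSemidef_sum _ fun j _ => posSemidef_vecMulVec_self_star _)).isHermitian
    simp [g, star_sum, w, (hM _).star_det_smul_one_add]
  rcases lt_trichotomy z.im 0 with h | h | h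
  · exact absurd (by rw [← hconj, hroot, star_zero]) (hupper (star z) (by simpa using h))
  · exact h
  · exact absurd hroot (hupper z h)
end

section
/- Let D be a mixed graph whose underlying simple graph G is bipartite, with n vertices. Then the spectrum of the Hermitian adjacency matrix H(D) is symmetric about the origin; equivalently, det(xI − H(D)) = (−1)^n det(−xI − H(D)), so that λ is an eigenvalue of H(D) with multiplicity k if and only if −λ is an eigenvalue of H(D) with multiplicity k. -/
/-!
A proper 2-colouring of `G` gives a diagonal `±1` matrix `S` with `S² = 1`, and every matrix
supported on the edges of `G` satisfies `S A S = -A`. Hence `A` and `-A` have the same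
characteristic polynomial, while `χ_{-A}(x) = (-1)ⁿ χ_A(-x)` holds for every square matrix.
-/

variable {V : Type*}

open Classical in
/-- The Hermitian adjacency matrix of a mixed graph `D` on `G`: the orientation data
`σ` is skew-symmetric with `σ u v = 0` meaning the edge `{u,v}` is unoriented (entry `1`),
and `σ u v = ±1` meaning the edge is oriented (entry `±i`). -/
noncomputable def mixedHermAll (G : SimpleGraph V) (σ : V → V → ℤ) : Matrix V V ℂ :=
  Matrix.of fun u v =>
    if G.Adj u v then (if σ u v = 0 then 1 else Complex.I * (σ u v : ℂ)) else 0

open Polynomial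

namespace Matrix

variable {n R : Type*} [Fintype n] [DecidableEq n] [CommRing R]

theorem charpoly_neg (A : Matrix n n R) :
    (-A).charpoly = C ((-1) ^ Fintype.card n) * A.charpoly.comp (-X) := by
  have hmap : (compRingHom (-X)).mapMatrix (charmatrix A) = -charmatrix (-A) := by
    ext i j : 1
    by_cases h : i = j
    · subst h
      simp only [RingHom.mapMatrix_apply, map_apply, coe_compRingHom, charmatrix_apply_eq,
        sub_comp, X_comp, C_comp, neg_apply, map_neg]
      ring
    · simp [charmatrix_apply_ne _ _ _ h]
  have hcomp : A.charpoly.comp (-X) = (-1) ^ Fintype.card n * (-A).charpoly := by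
    rw [← coe_compRingHom_apply, charpoly, RingHom.map_det, hmap, det_neg, charpoly]
  rw [hcomp, ← mul_assoc, C_pow, map_neg, map_one, ← mul_pow, neg_one_mul, neg_neg, one_pow,
    one_mul]

theorem rootMultiplicity_charpoly_neg [IsDomain R] (A : Matrix n n R) (x : R) :
    (-A).charpoly.rootMultiplicity x = A.charpoly.rootMultiplicity (-x) := by
  have hne : (-A).charpoly ≠ 0 := (charpoly_monic _).ne_zero
  rw [charpoly_neg] at hne ⊢
  rw [rootMultiplicity_mul hne, rootMultiplicity_C, zero_add]
  simpa using rootMultiplicity_comp_C_mul_X_add_C A.charpoly (-1) 0 x isUnit_one.neg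

theorem det_smul_one_sub_of_charpoly_neg {A : Matrix n n R}
    (hA : (-A).charpoly = A.charpoly) (x : R) :
    (x • (1 : Matrix n n R) - A).det =
      (-1) ^ Fintype.card n * ((-x) • (1 : Matrix n n R) - A).det := by
  have h := congrArg (eval x) hA
  rw [charpoly_neg] at h
  simpa [eval_charpoly, smul_one_eq_diagonal, scalar_apply] using h.symm

end Matrix

open Matrix

namespace SimpleGraph.Coloring

variable {G : SimpleGraph V} [Fintype V] [DecidableEq V] (R : Type*) [CommRing R]

def signMatrix (c : G.Coloring (Fin 2)) : Matrix V V R :=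
  diagonal fun v => if c v = 0 then 1 else -1

variable {R}

theorem signMatrix_mul_self (c : G.Coloring (Fin 2)) :
    c.signMatrix R * c.signMatrix R = 1 := by
  rw [signMatrix, diagonal_mul_diagonal, ← diagonal_one]
  congr with v
  split_ifs <;> simp

theorem signMatrix_mul_mul_signMatrix (c : G.Coloring (Fin 2)) {A : Matrix V V R}
    (hA : ∀ u v, ¬ G.Adj u v → A u v = 0) :
    c.signMatrix R * A * c.signMatrix R = -A := by
  ext u v
  simp only [signMatrix, diagonal_mul, mul_diagonal]
  by_cases huv : G.Adj u v
  · have hne := c.valid huv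
    revert hne
    generalize c u = a, c v = b
    fin_cases a <;> fin_cases b <;> simp
  · simp [hA u v huv]

end SimpleGraph.Coloring

theorem SimpleGraph.Colorable.charpoly_neg_eq_charpoly {R : Type*} [Fintype V] [DecidableEq V]
    [CommRing R] {G : SimpleGraph V} (hG : G.Colorable 2) {A : Matrix V V R}
    (hA : ∀ u v, ¬ G.Adj u v → A u v = 0) : (-A).charpoly = A.charpoly := by
  obtain ⟨c⟩ := hG
  rw [← c.signMatrix_mul_mul_signMatrix hA, mul_assoc, charpoly_mul_comm, mul_assoc,
    c.signMatrix_mul_self, mul_one]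

theorem mixedHermAll_apply_of_not_adj {G : SimpleGraph V} (σ : V → V → ℤ) {u v : V}
    (h : ¬ G.Adj u v) : mixedHermAll G σ u v = 0 := by
  simp [mixedHermAll, h]

theorem mixed_bipartite_symmetric_spectrum_general {V : Type*} [Fintype V] [DecidableEq V]
    (G : SimpleGraph V) (hbip : G.Colorable 2) (σ : V → V → ℤ) :
    (∀ x : ℂ, (x • (1 : Matrix V V ℂ) - mixedHermAll G σ).det =
        (-1 : ℂ) ^ (Fintype.card V) * ((-x) • (1 : Matrix V V ℂ) - mixedHermAll G σ).det) ∧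
      ∀ x : ℂ, (mixedHermAll G σ).charpoly.rootMultiplicity x =
        (mixedHermAll G σ).charpoly.rootMultiplicity (-x) := by
  have hsymm : (-mixedHermAll G σ).charpoly = (mixedHermAll G σ).charpoly :=
    hbip.charpoly_neg_eq_charpoly fun _ _ => mixedHermAll_apply_of_not_adj σ
  refine ⟨det_smul_one_sub_of_charpoly_neg hsymm, fun x => ?_⟩
  rw [← rootMultiplicity_charpoly_neg, hsymm]

/-- The spectrum of the Hermitian adjacency matrix of a mixed graph with a
bipartite underlying graph is symmetric about the origin:
`det(xI − H) = (−1)^n det(−xI − H)`, and every `λ` is an eigenvalue with the same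
multiplicity as `−λ`. -/
theorem mixed_bipartite_symmetric_spectrum {V : Type*} [Fintype V] [DecidableEq V]
    (G : SimpleGraph V) (hbip : G.Colorable 2) (σ : V → V → ℤ)
    (hskew : ∀ u v, σ v u = -σ u v)
    (hval : ∀ u v, G.Adj u v → σ u v = 0 ∨ σ u v = 1 ∨ σ u v = -1) :
    (∀ x : ℂ, (x • (1 : Matrix V V ℂ) - mixedHermAll G σ).det =
        (-1 : ℂ) ^ (Fintype.card V) * ((-x) • (1 : Matrix V V ℂ) - mixedHermAll G σ).det) ∧
      ∀ x : ℂ, (mixedHermAll G σ).charpoly.rootMultiplicity x =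
        (mixedHermAll G σ).charpoly.rootMultiplicity (-x) :=
  mixed_bipartite_symmetric_spectrum_general G hbip σ
end

section
/- Let G be a finite simple graph with n vertices and let σ be a complete orientation of G (every edge of G is oriented). Then the spectrum of the Hermitian adjacency matrix H(G^σ) is symmetric about the origin; equivalently, det(xI − H(G^σ)) = (−1)^n det(−xI − H(G^σ)), so that λ is an eigenvalue of H(G^σ) with multiplicity k if and only if −λ is an eigenvalue of H(G^σ) with multiplicity k. -/
variable {V : Type*}

/-! Both claims come from one polynomial identity. Since `τ` is skew, `H = orientHerm G τ` satisfies
`Hᵀ = -H`, so `χ_H = χ_{Hᵀ} = χ_{-H}`, while substituting `-X` into `χ_H = det (X - H)` gives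
`(-1)^n χ_{-H}`. Hence `χ_H(-X) = (-1)^n χ_H`: evaluating yields the determinant identity, and
`-X` carries a root of multiplicity `k` at `λ` to one at `-λ`. -/

open Polynomial Matrix

theorem Polynomial.rootMultiplicity_neg_of_comp_neg_X {R : Type*} [CommRing R] [IsDomain R]
    {p : R[X]} {k : ℕ} (hp : p.comp (-X) = (-1) ^ k * p) (a : R) :
    p.rootMultiplicity (-a) = p.rootMultiplicity a := by
  classical
  have hcomp : (p.comp (-X)).rootMultiplicity a = p.rootMultiplicity (-a) := by
    simpa using rootMultiplicity_comp_C_mul_X_add_C p (-1) 0 a isUnit_neg_one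
  have hunit : ((-1) ^ k * p).rootMultiplicity a = p.rootMultiplicity a := by
    rw [show ((-1) ^ k : R[X]) = C ((-1) ^ k) by simp, ← count_roots, ← count_roots,
      roots_C_mul _ (by simp)]
  rw [← hcomp, hp, hunit]

namespace Matrix

variable {n R : Type*} [Fintype n] [DecidableEq n] [CommRing R]

theorem charpoly_comp_neg_X (A : Matrix n n R) :
    A.charpoly.comp (-X) = (-1) ^ Fintype.card n * (-A).charpoly := by
  have hmap : (compRingHom (-X : R[X])).mapMatrix (charmatrix A) = -charmatrix (-A) := by
    refine Matrix.ext fun i j => ?_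
    by_cases hij : i = j
    · subst hij; simp [sub_eq_add_neg, add_comm]
    · simp [charmatrix_apply_ne _ _ _ hij]
  rw [charpoly, ← coe_compRingHom_apply, RingHom.map_det, hmap, det_neg, charpoly]

theorem charpoly_comp_neg_X_of_transpose_eq_neg {A : Matrix n n R} (hA : Aᵀ = -A) :
    A.charpoly.comp (-X) = (-1) ^ Fintype.card n * A.charpoly := by
  rw [charpoly_comp_neg_X, ← hA, charpoly_transpose]

theorem det_smul_one_sub_of_transpose_eq_neg {A : Matrix n n R} (hA : Aᵀ = -A) (x : R) :
    (x • (1 : Matrix n n R) - A).det =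
      (-1) ^ Fintype.card n * ((-x) • (1 : Matrix n n R) - A).det := by
  simpa [eval_charpoly, smul_one_eq_diagonal] using
    congr_arg (eval (-x)) (charpoly_comp_neg_X_of_transpose_eq_neg hA)

end Matrix

theorem orientHerm_transpose (G : SimpleGraph V) {τ : V → V → ℤ}
    (hskew : ∀ u v, τ v u = -τ u v) : (orientHerm G τ)ᵀ = -orientHerm G τ := by
  refine Matrix.ext fun u v => ?_
  by_cases h : G.Adj u v
  · simp [orientHerm, h, h.symm, hskew u v]
  · simp [orientHerm, h, mt G.adj_symm h]

theorem oriented_symmetric_spectrum_general {V : Type*} [Fintype V] [DecidableEq V]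
    (G : SimpleGraph V) (τ : V → V → ℤ)
    (hskew : ∀ u v, τ v u = -τ u v) :
    (∀ x : ℂ, (x • (1 : Matrix V V ℂ) - orientHerm G τ).det =
        (-1 : ℂ) ^ (Fintype.card V) * ((-x) • (1 : Matrix V V ℂ) - orientHerm G τ).det) ∧
      ∀ x : ℂ, (orientHerm G τ).charpoly.rootMultiplicity x =
        (orientHerm G τ).charpoly.rootMultiplicity (-x) := by
  have hH := orientHerm_transpose G hskew
  exact ⟨det_smul_one_sub_of_transpose_eq_neg hH, fun x =>
    (rootMultiplicity_neg_of_comp_neg_X (charpoly_comp_neg_X_of_transpose_eq_neg hH) x).symm⟩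

/-- The spectrum of the Hermitian adjacency matrix of a completely oriented
graph is symmetric about the origin: `det(xI − H) = (−1)^n det(−xI − H)`, and every `λ` is
an eigenvalue with the same multiplicity as `−λ`. -/
theorem oriented_symmetric_spectrum {V : Type*} [Fintype V] [DecidableEq V]
    (G : SimpleGraph V) (τ : V → V → ℤ)
    (hskew : ∀ u v, τ v u = -τ u v)
    (hval : ∀ u v, G.Adj u v → τ u v = 1 ∨ τ u v = -1) :
    (∀ x : ℂ, (x • (1 : Matrix V V ℂ) - orientHerm G τ).det =
        (-1 : ℂ) ^ (Fintype.card V) * ((-x) • (1 : Matrix V V ℂ) - orientHerm G τ).det) ∧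
      ∀ x : ℂ, (orientHerm G τ).charpoly.rootMultiplicity x =
        (orientHerm G τ).charpoly.rootMultiplicity (-x) :=
  oriented_symmetric_spectrum_general G τ hskew
end

section
/- Let D be any mixed graph with underlying finite simple graph G. Then the spectral radius of the Hermitian adjacency matrix H(D) (the largest absolute value of its eigenvalues) is at most the spectral radius of the adjacency matrix A(G) of G. -/
variable {V : Type*}

/-!
Take an eigenvector `v` of `H(D)` for the eigenvalue `μ` and put `y u = ‖v u‖`. Every entry of
`H(D)` has modulus equal to the corresponding entry of `A(G)`, so the triangle inequality in
`H(D) v = μ v` gives `|μ| y ≤ A(G) y` entrywise, hence `|μ| ⟪y, y⟫ ≤ ⟪y, A(G) y⟫`. Diagonalizing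
`A(G)` bounds the right-hand side by the largest eigenvalue of `A(G)` times `⟪y, y⟫`.
-/

namespace Matrix

variable {n : Type*} [Fintype n]

theorem IsHermitian.dotProduct_mulVec_le [DecidableEq n] {A : Matrix n n ℝ} (hA : A.IsHermitian)
    {c : ℝ} (hc : ∀ j, hA.eigenvalues j ≤ c) (y : n → ℝ) :
    y ⬝ᵥ (A *ᵥ y) ≤ c * (y ⬝ᵥ y) := by
  set U : Matrix n n ℝ := (hA.eigenvectorUnitary : Matrix n n ℝ)
  have hUt : star U = Uᵀ := conjTranspose_eq_transpose_of_trivial U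
  have hUU : U * Uᵀ = 1 := hUt ▸ mem_unitaryGroup_iff.mp hA.eigenvectorUnitary.2
  have hdot : ∀ w, y ⬝ᵥ (U *ᵥ w) = (Uᵀ *ᵥ y) ⬝ᵥ w := fun w => by
    rw [mulVec_transpose, dotProduct_mulVec]
  set z := Uᵀ *ᵥ y
  have hzz : z ⬝ᵥ z = y ⬝ᵥ y := by rw [← hdot, mulVec_mulVec, hUU, one_mulVec]
  have hyAy : y ⬝ᵥ (A *ᵥ y) = z ⬝ᵥ (diagonal hA.eigenvalues *ᵥ z) := by
    conv_lhs => rw [hA.spectral_theorem, Unitary.conjStarAlgAut_apply]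
    rw [hUt, ← mulVec_mulVec, ← mulVec_mulVec, hdot]
    rfl -- `RCLike.ofReal` is the identity on `ℝ`
  rw [hyAy, ← hzz, dotProduct, dotProduct, Finset.mul_sum]
  refine Finset.sum_le_sum fun j _ => ?_
  rw [mulVec_diagonal, mul_left_comm]
  exact mul_le_mul_of_nonneg_right (hc j) (mul_self_nonneg _)

variable {𝕜 : Type*} [NormedField 𝕜] {H : Matrix n n 𝕜} {A : Matrix n n ℝ}

theorem norm_eigenvalue_mul_norm_le_mulVec_norm (hHA : ∀ u w, ‖H u w‖ ≤ A u w) {μ : 𝕜} {v : n → 𝕜}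
    (hv : H *ᵥ v = μ • v) (u : n) : ‖μ‖ * ‖v u‖ ≤ (A *ᵥ fun w => ‖v w‖) u :=
  calc ‖μ‖ * ‖v u‖ = ‖∑ w, H u w * v w‖ := by
        rw [← norm_mul, ← smul_eq_mul, ← Pi.smul_apply, ← hv]; rfl
    _ ≤ ∑ w, ‖H u w‖ * ‖v w‖ := norm_sum_le_of_le _ fun w _ => norm_mul_le _ _
    _ ≤ ∑ w, A u w * ‖v w‖ :=
        Finset.sum_le_sum fun w _ => mul_le_mul_of_nonneg_right (hHA u w) (norm_nonneg _)

theorem norm_eigenvalue_le_of_norm_le [DecidableEq n] (hA : A.IsHermitian)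
    (hHA : ∀ u w, ‖H u w‖ ≤ A u w) {μ : 𝕜} {v : n → 𝕜} (hv0 : v ≠ 0) (hv : H *ᵥ v = μ • v)
    {c : ℝ} (hc : ∀ j, hA.eigenvalues j ≤ c) : ‖μ‖ ≤ c := by
  set y : n → ℝ := fun w => ‖v w‖
  have hy : 0 < y ⬝ᵥ y := by
    obtain ⟨u, hu⟩ := Function.ne_iff.mp hv0
    exact Finset.sum_pos' (fun w _ => mul_self_nonneg (y w))
      ⟨u, Finset.mem_univ u, mul_self_pos.mpr (norm_ne_zero_iff.mpr hu)⟩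
  refine le_of_mul_le_mul_right ?_ hy
  calc ‖μ‖ * (y ⬝ᵥ y) = ∑ u, y u * (‖μ‖ * y u) := by
        rw [dotProduct, Finset.mul_sum]; exact Finset.sum_congr rfl fun u _ => by ring
    _ ≤ y ⬝ᵥ (A *ᵥ y) := Finset.sum_le_sum fun u _ =>
        mul_le_mul_of_nonneg_left (norm_eigenvalue_mul_norm_le_mulVec_norm hHA hv u) (norm_nonneg _)
    _ ≤ c * (y ⬝ᵥ y) := hA.dotProduct_mulVec_le hc y

end Matrix

open Matrix

theorem norm_mixedHermAll_apply {G : SimpleGraph V} [DecidableRel G.Adj] {σ : V → V → ℤ}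
    (hval : ∀ u v, G.Adj u v → σ u v = 0 ∨ σ u v = 1 ∨ σ u v = -1) (u v : V) :
    ‖mixedHermAll G σ u v‖ = G.adjMatrix ℝ u v := by
  by_cases h : G.Adj u v
  · rcases hval u v h with h0 | h1 | h1 <;> simp [mixedHermAll, *]
  · simp [mixedHermAll, h]

open Classical in
theorem mixed_spectral_radius_le_adjMatrix_general {V : Type*} [Fintype V]
    (G : SimpleGraph V) (σ : V → V → ℤ)
    (hval : ∀ u v, G.Adj u v → σ u v = 0 ∨ σ u v = 1 ∨ σ u v = -1)
    (hH : (mixedHermAll G σ).IsHermitian) (hA : (G.adjMatrix ℝ).IsHermitian) :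
    ∀ i, |hH.eigenvalues i| ≤ ⨆ j, |hA.eigenvalues j| := by
  intro i
  have hv : mixedHermAll G σ *ᵥ ⇑(hH.eigenvectorBasis i)
      = (hH.eigenvalues i : ℂ) • ⇑(hH.eigenvectorBasis i) := by
    rw [hH.mulVec_eigenvectorBasis, RCLike.real_smul_eq_coe_smul (K := ℂ)]; rfl
  have hv0 : ⇑(hH.eigenvectorBasis i) ≠ 0 := fun h =>
    hH.eigenvectorBasis.orthonormal.ne_zero i (by ext u; exact congrFun h u)
  have hc : ∀ j, hA.eigenvalues j ≤ ⨆ j, |hA.eigenvalues j| := fun j =>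
    (le_abs_self _).trans <|
      le_ciSup (f := fun j => |hA.eigenvalues j|) (Set.finite_range _).bddAbove j
  simpa using norm_eigenvalue_le_of_norm_le hA (fun u w => (norm_mixedHermAll_apply hval u w).le)
    hv0 hv hc

open Classical in
/-- The spectral radius of the Hermitian adjacency matrix of any mixed graph
on `G` is at most the spectral radius of the adjacency matrix of `G`. -/
theorem mixed_spectral_radius_le_adjMatrix {V : Type*} [Fintype V] [DecidableEq V]
    (G : SimpleGraph V) (σ : V → V → ℤ)
    (hskew : ∀ u v, σ v u = -σ u v)
    (hval : ∀ u v, G.Adj u v → σ u v = 0 ∨ σ u v = 1 ∨ σ u v = -1)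
    (hH : (mixedHermAll G σ).IsHermitian) (hA : (G.adjMatrix ℝ).IsHermitian) :
    ∀ i, |hH.eigenvalues i| ≤ ⨆ j, |hA.eigenvalues j| :=
  mixed_spectral_radius_le_adjMatrix_general G σ hval hH hA
end

section
/- For every finite simple graph G, the matching polynomial μ_G(x) has only real roots. -/
open Polynomial

variable {V : Type*}

/-!
Heilmann–Lieb. Deleting a vertex `v` gives the recursion
`μ_S = x μ_{S-v} - ∑_{u ~ v} μ_{S-v-u}` for the matching polynomials of induced subgraphs.
Fix `z` with `Im z > 0`. By induction on `S`, every `μ_S(z)` is nonzero and every ratio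
`μ_S(z) / μ_{S-v}(z)` has imaginary part at least `Im z`: dividing the recursion by
`μ_{S-v}(z)` writes the ratio as `z` minus reciprocals of ratios for `S - v`, and reciprocals of
points of the upper half-plane lie in the lower one. So `μ_G` has no root with `Im z > 0`, and
none with `Im z < 0` because its coefficients are real.
-/

open Finset

noncomputable section

open scoped Classical

theorem IsMatchingSet.subset {G : SimpleGraph V} {M N : Finset (Sym2 V)}
    (h : IsMatchingSet G M) (hNM : N ⊆ M) : IsMatchingSet G N :=
  ⟨(coe_subset.2 hNM).trans h.1, h.2.mono (coe_subset.2 hNM)⟩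

theorem IsMatchingSet.insert {G : SimpleGraph V} {M : Finset (Sym2 V)} {e : Sym2 V}
    (h : IsMatchingSet G M) (he : e ∈ G.edgeSet) (hdisj : ∀ f ∈ M, ∀ w ∈ e, w ∉ f) :
    IsMatchingSet G (insert e M) := by
  rw [IsMatchingSet, coe_insert]
  exact ⟨Set.insert_subset he h.1,
    h.2.insert fun f hf _ => ⟨hdisj f hf, fun w hwf hwe => hdisj f hf w hwe hwf⟩⟩

theorem IsMatchingSet.two_mul_card_le_s16 {G : SimpleGraph V} {M : Finset (Sym2 V)}
    {S : Finset V} (h : IsMatchingSet G M) (hS : ∀ e ∈ M, ∀ w ∈ e, w ∈ S) :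
    2 * #M ≤ #S :=
  calc 2 * #M = ∑ e ∈ M, #e.toFinset := by
        rw [sum_congr rfl fun e he => Sym2.card_toFinset_of_not_isDiag e
          (G.not_isDiag_of_mem_edgeSet (h.1 he)), sum_const, smul_eq_mul, mul_comm]
    _ = #(M.biUnion Sym2.toFinset) := by
        refine (card_biUnion fun e he f hf hef => disjoint_left.2 fun w hwe hwf => ?_).symm
        exact h.2 he hf hef w (Sym2.mem_toFinset.1 hwe) (Sym2.mem_toFinset.1 hwf)
    _ ≤ #S := card_le_card fun w hw => by
        obtain ⟨e, he, hwe⟩ := mem_biUnion.1 hw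
        exact hS e he w (Sym2.mem_toFinset.1 hwe)

theorem Complex.im_le_im_div_of_eq_mul_sub_sum {ι : Type*} (s : Finset ι) {z a w : ℂ}
    {b : ι → ℂ} (hw : w ≠ 0) (ha : a = z * w - ∑ i ∈ s, b i)
    (hb : ∀ i ∈ s, 0 ≤ (w / b i).im) : z.im ≤ (a / w).im := by
  have hdiv : a / w = z - ∑ i ∈ s, (w / b i)⁻¹ := by
    simp_rw [ha, sub_div, sum_div, mul_div_cancel_right₀ _ hw, inv_div]
  have him : ∀ i ∈ s, (w / b i)⁻¹.im ≤ 0 := fun i hi => by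
    rw [inv_im]
    exact div_nonpos_of_nonpos_of_nonneg (neg_nonpos.2 (hb i hi)) (normSq_nonneg _)
  rw [hdiv, sub_im, im_sum]
  linarith [sum_nonpos him]

namespace SimpleGraph

variable [Fintype V] (G : SimpleGraph V) {S T : Finset V} {M : Finset (Sym2 V)} {v : V}

def matchingsOn (S : Finset V) : Finset (Finset (Sym2 V)) :=
  {M | IsMatchingSet G M ∧ ∀ e ∈ M, ∀ w ∈ e, w ∈ S}

variable {G} in
theorem mem_matchingsOn :
    M ∈ G.matchingsOn S ↔ IsMatchingSet G M ∧ ∀ e ∈ M, ∀ w ∈ e, w ∈ S := by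
  simp [matchingsOn]

theorem matchingsOn_empty : G.matchingsOn ∅ = {∅} := by
  ext M
  simp only [mem_matchingsOn, mem_singleton, notMem_empty, imp_false]
  constructor
  · rintro ⟨-, hM⟩
    exact eq_empty_of_forall_notMem fun e he => hM e he _ e.out_fst_mem
  · rintro rfl
    simp [IsMatchingSet]

theorem filter_matchingsOn_not_covering (v : V) :
    (G.matchingsOn S).filter (fun M => ¬ ∃ e ∈ M, v ∈ e) = G.matchingsOn (S.erase v) := by
  ext M
  simp only [mem_filter, mem_matchingsOn, mem_erase, not_exists, not_and]
  constructor
  · rintro ⟨⟨hM, hS⟩, hv⟩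
    exact ⟨hM, fun e he w hw => ⟨by rintro rfl; exact hv e he hw, hS e he w hw⟩⟩
  · rintro ⟨hM, hS⟩
    exact ⟨⟨hM, fun e he w hw => (hS e he w hw).2⟩, fun e he hv => (hS e he v hv).1 rfl⟩

variable {G} in
theorem mk_notMem_of_mem_matchingsOn (hM : M ∈ G.matchingsOn S) (hv : v ∉ S) (u : V) :
    s(v, u) ∉ M :=
  fun h => hv ((mem_matchingsOn.1 hM).2 _ h v (Sym2.mem_mk_left v u))

theorem filter_matchingsOn_covering (hv : v ∈ S) :
    (G.matchingsOn S).filter (fun M => ∃ e ∈ M, v ∈ e) =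
      ((S.erase v).filter (G.Adj v)).biUnion
        fun u => (G.matchingsOn ((S.erase v).erase u)).image (insert s(v, u)) := by
  ext M
  simp only [mem_filter, mem_biUnion, mem_image, mem_matchingsOn, mem_erase]
  constructor
  · rintro ⟨⟨hM, hS⟩, e, he, hve⟩
    obtain ⟨u, rfl⟩ := Sym2.mem_iff_exists.1 hve
    have hadj : G.Adj v u := hM.1 he
    refine ⟨u, ⟨⟨hadj.ne', hS _ he u (Sym2.mem_mk_right v u)⟩, hadj⟩, M.erase s(v, u),
      ⟨hM.subset (erase_subset _ _), fun f hf w hw => ?_⟩, insert_erase he⟩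
    have hw' : w ∉ s(v, u) := hM.2 (mem_of_mem_erase hf) he (ne_of_mem_erase hf) w hw
    exact ⟨fun h => hw' (h ▸ Sym2.mem_mk_right v u), fun h => hw' (h ▸ Sym2.mem_mk_left v u),
      hS f (mem_of_mem_erase hf) w hw⟩
  · rintro ⟨u, ⟨⟨huv, huS⟩, hadj⟩, M', ⟨hM', hS'⟩, rfl⟩
    refine ⟨⟨hM'.insert hadj fun f hf w hw hwf => ?_, fun e he w hw => ?_⟩,
      s(v, u), mem_insert_self _ _, Sym2.mem_mk_left v u⟩
    · obtain ⟨hwu, hwv, -⟩ := hS' f hf w hwf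
      rcases Sym2.mem_iff.1 hw with rfl | rfl <;> contradiction
    · rcases mem_insert.1 he with rfl | he
      · rcases Sym2.mem_iff.1 hw with rfl | rfl <;> assumption
      · exact (hS' e he w hw).2.2

/-- The matching polynomial of the induced subgraph `G[S]`. -/
def matchingPolyOn (S : Finset V) : ℝ[X] :=
  ∑ M ∈ G.matchingsOn S, (-1) ^ #M * X ^ (#S - 2 * #M)

theorem matchingPolyOn_empty : G.matchingPolyOn ∅ = 1 := by
  simp [matchingPolyOn, matchingsOn_empty]

theorem sum_filter_matchingsOn_not_covering (hv : v ∈ S) :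
    ∑ M ∈ (G.matchingsOn S).filter (fun M => ¬ ∃ e ∈ M, v ∈ e),
      (-1 : ℝ[X]) ^ #M * X ^ (#S - 2 * #M) = X * G.matchingPolyOn (S.erase v) := by
  rw [filter_matchingsOn_not_covering, matchingPolyOn, mul_sum]
  refine sum_congr rfl fun M hM => ?_
  have := (mem_matchingsOn.1 hM).1.two_mul_card_le_s16 (mem_matchingsOn.1 hM).2
  have := card_erase_add_one hv
  rw [show #S - 2 * #M = #(S.erase v) - 2 * #M + 1 by omega, pow_succ]
  ring

theorem pairwiseDisjoint_image_insert_mk_matchingsOn (v : V) :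
    (S : Set V).PairwiseDisjoint
      fun u => (G.matchingsOn ((T.erase v).erase u)).image (insert s(v, u)) := by
  intro u₁ _ u₂ _ hne
  rw [Function.onFun, Finset.disjoint_left]
  intro M hM hM'
  obtain ⟨M₁, hM₁, rfl⟩ := mem_image.1 hM
  obtain ⟨M₂, -, h⟩ := mem_image.1 hM'
  rcases mem_insert.1 (h ▸ mem_insert_self s(v, u₂) M₂) with h' | h'
  · exact hne (Sym2.congr_right.1 h').symm
  · exact mk_notMem_of_mem_matchingsOn hM₁ (by simp) u₂ h'

theorem sum_filter_matchingsOn_covering (hv : v ∈ S) :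
    ∑ M ∈ (G.matchingsOn S).filter (fun M => ∃ e ∈ M, v ∈ e),
      (-1 : ℝ[X]) ^ #M * X ^ (#S - 2 * #M) =
        -∑ u ∈ (S.erase v).filter (G.Adj v), G.matchingPolyOn ((S.erase v).erase u) := by
  rw [filter_matchingsOn_covering G hv,
    sum_biUnion (G.pairwiseDisjoint_image_insert_mk_matchingsOn v), ← sum_neg_distrib]
  refine sum_congr rfl fun u hu => ?_
  obtain ⟨huv, huS⟩ := mem_erase.1 (mem_filter.1 hu).1
  have hv_notMem : v ∉ (S.erase v).erase u := by simp
  have hcard : #((S.erase v).erase u) + 2 = #S := by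
    have := one_lt_card.2 ⟨u, huS, v, hv, huv⟩
    rw [card_erase_of_mem (mem_erase.2 ⟨huv, huS⟩), card_erase_of_mem hv]
    omega
  rw [sum_image fun M₁ h₁ M₂ h₂ h => by
    simpa [erase_insert (mk_notMem_of_mem_matchingsOn h₁ hv_notMem u),
      erase_insert (mk_notMem_of_mem_matchingsOn h₂ hv_notMem u)] using
      congrArg (·.erase s(v, u)) h]
  rw [matchingPolyOn, ← sum_neg_distrib]
  refine sum_congr rfl fun M hM => ?_
  have := (mem_matchingsOn.1 hM).1.two_mul_card_le_s16 (mem_matchingsOn.1 hM).2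
  rw [card_insert_of_notMem (mk_notMem_of_mem_matchingsOn hM hv_notMem u),
    show #S - 2 * (#M + 1) = #((S.erase v).erase u) - 2 * #M by omega]
  ring

theorem matchingPolyOn_eq_X_mul_sub_sum (hv : v ∈ S) :
    G.matchingPolyOn S = X * G.matchingPolyOn (S.erase v) -
      ∑ u ∈ (S.erase v).filter (G.Adj v), G.matchingPolyOn ((S.erase v).erase u) := by
  rw [matchingPolyOn, ← sum_filter_add_sum_filter_not _ (fun M => ∃ e ∈ M, v ∈ e),
    G.sum_filter_matchingsOn_covering hv, G.sum_filter_matchingsOn_not_covering hv]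
  ring

theorem numMatchings_eq_card_filter_matchingsOn (k : ℕ) :
    numMatchings G k = #((G.matchingsOn univ).filter (#· = k)) := by
  rw [numMatchings, Nat.card_eq_fintype_card, Fintype.card_subtype]
  congr 1
  ext M
  simp [mem_matchingsOn, and_comm]

theorem matchingPoly_eq_matchingPolyOn_univ : matchingPoly G = G.matchingPolyOn univ := by
  have hmaps : ∀ M ∈ G.matchingsOn univ, #M ∈ range (Fintype.card V + 1) := fun M hM => by
    have := (mem_matchingsOn.1 hM).1.two_mul_card_le_s16 (mem_matchingsOn.1 hM).2
    rw [card_univ] at this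
    exact mem_range.2 (by omega)
  rw [matchingPolyOn, ← sum_fiberwise_of_maps_to hmaps, matchingPoly]
  refine sum_congr rfl fun k _ => ?_
  rw [sum_congr rfl fun M hM => by rw [(mem_filter.1 hM).2], sum_const, card_univ,
    numMatchings_eq_card_filter_matchingsOn, nsmul_eq_mul]
  simp only [C_mul, C_pow, map_neg, map_one, map_natCast]
  ring

theorem aeval_matchingPolyOn_ne_zero_and_im_le {z : ℂ} (hz : 0 < z.im) (S : Finset V) :
    aeval z (G.matchingPolyOn S) ≠ 0 ∧ ∀ v ∈ S,
      z.im ≤ (aeval z (G.matchingPolyOn S) / aeval z (G.matchingPolyOn (S.erase v))).im := by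
  induction S using Finset.strongInduction with
  | H S ih =>
  have ratio : ∀ v ∈ S,
      z.im ≤ (aeval z (G.matchingPolyOn S) / aeval z (G.matchingPolyOn (S.erase v))).im := by
    intro v hv
    have hsub := erase_ssubset hv
    refine Complex.im_le_im_div_of_eq_mul_sub_sum ((S.erase v).filter (G.Adj v))
      (b := fun u => aeval z (G.matchingPolyOn ((S.erase v).erase u))) (ih _ hsub).1 ?_
      fun u hu => ?_
    · simp [G.matchingPolyOn_eq_X_mul_sub_sum hv]
    · exact hz.le.trans ((ih _ hsub).2 u (mem_filter.1 hu).1)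
  refine ⟨fun h0 => ?_, ratio⟩
  obtain rfl | ⟨v, hv⟩ := S.eq_empty_or_nonempty
  · simp [matchingPolyOn_empty] at h0
  · simpa [h0] using hz.trans_le (ratio v hv)

end SimpleGraph

end

open ComplexConjugate in
/-- The matching polynomial of a finite simple graph has only real roots. -/
theorem matchingPoly_real_rooted {V : Type*} [Fintype V] (G : SimpleGraph V) :
    ∀ z : ℂ, Polynomial.aeval z (matchingPoly G) = 0 → z.im = 0 := by
  intro z hz
  rw [G.matchingPoly_eq_matchingPolyOn_univ] at hz
  by_contra hne
  rcases lt_or_gt_of_ne hne with hlt | hgt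
  · refine (G.aeval_matchingPolyOn_ne_zero_and_im_le (z := conj z) (by simpa using hlt) univ).1 ?_
    rw [aeval_conj, hz, map_zero]
  · exact (G.aeval_matchingPolyOn_ne_zero_and_im_le hgt univ).1 hz
end
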